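/- arXiv:math/0606068 — 7 statements merged into one kernel-verified Lean document; each statement's English description precedes it below -/
import Mathlib

section
/- Let Z be a smooth knee-jerk function on the positive orthant in ℝⁿ, let x be a point of the positive orthant with Σᵢ xᵢ Z_{xᵢ}(x) > 0, and let x' = T_Z(x) where (T_Z(x))ᵢ = xᵢ Z_{xᵢ}(x) / Σⱼ xⱼ Z_{xⱼ}(x). Then log(Z(x')/Z(x)) ≥ (Σᵢ xᵢ Z_{xᵢ}(x)/Z(x)) · Σᵢ x'ᵢ log(x'ᵢ/xᵢ), where terms with x'ᵢ = 0 are interpreted as 0. -/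
/-- The knee-jerk inequality.  `Z` is a smooth knee-jerk function (positive, monotone,
log-log-convex, extending continuously to the closed orthant), `x` is in the positive
orthant with `∑ xᵢ Z_{xᵢ} > 0`, and `x' = T_Z x`. -/
theorem stmt_10 (n : ℕ) (Z : (Fin n → ℝ) → ℝ)
    (hpos : ∀ x : Fin n → ℝ, (∀ i, 0 < x i) → 0 < Z x)
    (hmono : ∀ x y : Fin n → ℝ, (∀ i, 0 < x i) → (∀ i, 0 < y i) →
      (∀ i, x i ≤ y i) → Z x ≤ Z y)
    (hconv : ConvexOn ℝ Set.univ
      (fun u : Fin n → ℝ => Real.log (Z (fun i => Real.exp (u i)))))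
    (hsmooth : ContDiffOn ℝ (⊤ : ℕ∞) Z {x : Fin n → ℝ | ∀ i, 0 < x i})
    (hcont : ContinuousOn Z {x : Fin n → ℝ | ∀ i, 0 ≤ x i})
    (x : Fin n → ℝ) (hx : ∀ i, 0 < x i)
    (S : ℝ) (hS : S = ∑ i, x i * fderiv ℝ Z x (Pi.single i 1)) (hSpos : 0 < S)
    (x' : Fin n → ℝ) (hx' : ∀ i, x' i = x i * fderiv ℝ Z x (Pi.single i 1) / S) :
    Real.log (Z x' / Z x) ≥ (S / Z x) * ∑ i, x' i * Real.log (x' i / x i) := by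
  classical
  have hZx : 0 < Z x := hpos x hx
  -- the open positive orthant
  have hU : IsOpen {y : Fin n → ℝ | ∀ i, 0 < y i} := by
    have h : {y : Fin n → ℝ | ∀ i, 0 < y i} =
        ⋂ i, (fun y : Fin n → ℝ => y i) ⁻¹' Set.Ioi 0 := by
      ext y; simp [Set.mem_iInter]
    rw [h]
    exact isOpen_iInter_of_finite fun i =>
      (continuous_apply i).isOpen_preimage _ isOpen_Ioi
  have hZd : HasFDerivAt Z (fderiv ℝ Z x) x := by
    have hdiff : DifferentiableOn ℝ Z {y : Fin n → ℝ | ∀ i, 0 < y i} :=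
      hsmooth.differentiableOn (by simp)
    exact (hdiff.differentiableAt (hU.mem_nhds hx)).hasFDerivAt
  -- derivatives are nonnegative
  have hDnn : ∀ i, 0 ≤ fderiv ℝ Z x (Pi.single i 1) := by
    intro i
    have h0 : x + (0:ℝ) • (Pi.single i 1 : Fin n → ℝ) = x := by simp
    have hc : HasDerivAt (fun t : ℝ => x + t • (Pi.single i 1 : Fin n → ℝ))
        (Pi.single i 1 : Fin n → ℝ) 0 := by
      simpa using ((hasDerivAt_id (0:ℝ)).smul_const (Pi.single i 1 : Fin n → ℝ)).const_add x
    have hφ : HasDerivAt (fun t : ℝ => Z (x + t • (Pi.single i 1 : Fin n → ℝ)))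
        (fderiv ℝ Z x (Pi.single i 1)) 0 := by
      have hZd0 : HasFDerivAt Z (fderiv ℝ Z x)
          ((fun t : ℝ => x + t • (Pi.single i 1 : Fin n → ℝ)) 0) := by
        simp only []
        rw [h0]; exact hZd
      have h := hZd0.comp_hasDerivAt 0 hc
      simpa [Function.comp_def] using h
    have htend : Filter.Tendsto (slope (fun t : ℝ => Z (x + t • (Pi.single i 1 : Fin n → ℝ))) 0)
        (nhdsWithin (0:ℝ) (Set.Ioi 0)) (nhds (fderiv ℝ Z x (Pi.single i 1))) :=
      (hasDerivAt_iff_tendsto_slope.mp hφ).mono_left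
        (nhdsWithin_mono _ (fun t ht => ne_of_gt ht))
    refine ge_of_tendsto htend (Filter.eventually_of_mem self_mem_nhdsWithin ?_)
    intro t ht
    have ht' : (0:ℝ) < t := ht
    have hle : Z x ≤ Z (x + t • (Pi.single i 1 : Fin n → ℝ)) := by
      refine hmono x _ hx ?_ ?_
      · intro j
        have := hx j
        by_cases hji : j = i
        · subst hji; simp [Pi.single_apply]; positivity
        · simpa [Pi.single_apply, hji] using this
      · intro j
        by_cases hji : j = i
        · subst hji; simp [Pi.single_apply]; positivity
        · simp [Pi.single_apply, hji]
    have : slope (fun t : ℝ => Z (x + t • (Pi.single i 1 : Fin n → ℝ))) 0 t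
        = (Z (x + t • (Pi.single i 1 : Fin n → ℝ)) - Z x) / t := by
      rw [slope_def_field]; simp [h0]
    rw [this]
    exact div_nonneg (by linarith) ht'.le
  have hx'nn : ∀ i, 0 ≤ x' i := fun i => by
    rw [hx' i]
    exact div_nonneg (mul_nonneg (hx i).le (hDnn i)) hSpos.le
  have hxD : ∀ i, x i * fderiv ℝ Z x (Pi.single i 1) = S * x' i := by
    intro i
    rw [hx' i]; field_simp
  -- the log-log function and its derivative
  set g : (Fin n → ℝ) → ℝ :=
    fun u : Fin n → ℝ => Real.log (Z (fun i => Real.exp (u i))) with hgdef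
  set u0 : Fin n → ℝ := fun i => Real.log (x i) with hu0
  set L : (Fin n → ℝ) →L[ℝ] (Fin n → ℝ) :=
    ContinuousLinearMap.pi (fun i => x i • ContinuousLinearMap.proj i) with hLdef
  set G : (Fin n → ℝ) →L[ℝ] ℝ := (Z x)⁻¹ • ((fderiv ℝ Z x).comp L) with hGdef
  have hexp0 : (fun i => Real.exp (u0 i)) = x := funext fun i => Real.exp_log (hx i)
  have hE : HasFDerivAt (fun u : Fin n → ℝ => fun i => Real.exp (u i)) L u0 := by
    rw [hLdef]
    apply hasFDerivAt_pi.mpr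
    intro i
    have h1 : HasFDerivAt (fun u : Fin n → ℝ => u i)
        (ContinuousLinearMap.proj i : (Fin n → ℝ) →L[ℝ] ℝ) u0 := hasFDerivAt_apply i u0
    have h2 := (Real.hasDerivAt_exp (u0 i)).comp_hasFDerivAt u0 h1
    have h3 : Real.exp (u0 i) = x i := Real.exp_log (hx i)
    simpa [Function.comp_def, h3] using h2
  have hZE : HasFDerivAt (fun u : Fin n → ℝ => Z (fun i => Real.exp (u i)))
      ((fderiv ℝ Z x).comp L) u0 := by
    have hZd' : HasFDerivAt Z (fderiv ℝ Z x) ((fun u : Fin n → ℝ => fun i => Real.exp (u i)) u0) := by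
      simpa [hexp0] using hZd
    have h := hZd'.comp u0 hE
    simpa [Function.comp_def] using h
  have hgd : HasFDerivAt g G u0 := by
    have hlog : HasDerivAt Real.log (Z x)⁻¹
        ((fun u : Fin n → ℝ => Z (fun i => Real.exp (u i))) u0) := by
      simp only [hexp0]
      exact Real.hasDerivAt_log hZx.ne'
    have h := hlog.comp_hasFDerivAt u0 hZE
    simpa [hgdef, hGdef, Function.comp_def] using h
  -- value of G on basis vectors
  have hGi : ∀ j, G (Pi.single j 1) = S * x' j / Z x := by
    intro j
    have h1 : L (Pi.single j (1:ℝ)) = x j • (Pi.single j 1 : Fin n → ℝ) := by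
      ext i
      by_cases h : i = j
      · subst h
        simp [hLdef]
      · simp [hLdef, Pi.single_apply, h]
    have h2 : G (Pi.single j 1) = (Z x)⁻¹ * fderiv ℝ Z x (L (Pi.single j 1)) := by
      simp [hGdef]
    rw [h2, h1, map_smul]
    have := hxD j
    simp only [smul_eq_mul]
    rw [← mul_assoc]
    rw [show (Z x)⁻¹ * x j * fderiv ℝ Z x (Pi.single j 1)
        = (x j * fderiv ℝ Z x (Pi.single j 1)) * (Z x)⁻¹ by ring, this]
    ring
  -- linearity of G
  have hGsum : ∀ w : Fin n → ℝ, G w = ∑ i, w i * (S * x' i / Z x) := by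
    intro w
    have hw : w = ∑ i, w i • (Pi.single i 1 : Fin n → ℝ) := by
      funext j
      simp [Finset.sum_apply, Pi.single_apply]
    conv_lhs => rw [hw]
    rw [map_sum]
    refine Finset.sum_congr rfl fun i _ => ?_
    rw [map_smul, smul_eq_mul, hGi i]
  -- gradient inequality
  have hgrad : ∀ v : Fin n → ℝ, g u0 + G (v - u0) ≤ g v := by
    intro v
    have hA : ConvexOn ℝ Set.univ (fun t : ℝ => g (t • (v - u0) + u0)) := by
      have h := hconv.comp_affineMap (AffineMap.lineMap u0 v : ℝ →ᵃ[ℝ] (Fin n → ℝ))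
      have he : (fun t : ℝ => g (t • (v - u0) + u0))
          = (fun u : Fin n → ℝ => Real.log (Z (fun i => Real.exp (u i)))) ∘
            (AffineMap.lineMap u0 v : ℝ →ᵃ[ℝ] (Fin n → ℝ)) := by
        funext t
        simp [hgdef, Function.comp, AffineMap.lineMap_apply]
      rw [he]
      simpa using h
    have hc : HasDerivAt (fun t : ℝ => t • (v - u0) + u0) (v - u0) 0 := by
      simpa using ((hasDerivAt_id (0:ℝ)).smul_const (v - u0)).add_const u0
    have hc0 : (fun t : ℝ => t • (v - u0) + u0) 0 = u0 := by simp
    have hder : HasDerivAt (fun t : ℝ => g (t • (v - u0) + u0)) (G (v - u0)) 0 := by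
      have hgd0 : HasFDerivAt g G ((fun t : ℝ => t • (v - u0) + u0) 0) := by
        simp only [zero_smul, zero_add]; exact hgd
      have h := hgd0.comp_hasDerivAt 0 hc
      simpa [Function.comp_def] using h
    have hslope := hA.le_slope_of_hasDerivAt (Set.mem_univ (0:ℝ)) (Set.mem_univ (1:ℝ))
      one_pos hder
    rw [slope_def_field] at hslope
    simp only [one_smul, zero_smul, zero_add, sub_zero, div_one, sub_add_cancel] at hslope
    linarith
  -- the constant C0
  set C0 : ℝ := ∑ i, (S * x' i / Z x) * (Real.log (x' i) - Real.log (x i)) with hC0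
  have hgu0 : g u0 = Real.log (Z x) := by
    simp only [hgdef]
    rw [hexp0]
  -- the approximating point
  set ψ : ℝ → (Fin n → ℝ) := fun t => fun i => if 0 < x' i then x' i else t with hψdef
  have hbound : ∀ t : ℝ, 0 < t → Real.exp (Real.log (Z x) + C0) ≤ Z (ψ t) := by
    intro t ht
    set v : Fin n → ℝ := fun i => if 0 < x' i then Real.log (x' i) else Real.log t with hv
    have hψpos : ∀ i, 0 < ψ t i := by
      intro i
      by_cases h : 0 < x' i
      · simpa [hψdef, h] using h
      · simpa [hψdef, h] using ht
    have hgv : g v = Real.log (Z (ψ t)) := by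
      simp only [hgdef]
      congr 1
      congr 1
      funext i
      by_cases h : 0 < x' i
      · simp [hv, hψdef, h, Real.exp_log h]
      · simp [hv, hψdef, h, Real.exp_log ht]
    have hGv : G (v - u0) = C0 := by
      rw [hGsum, hC0]
      refine Finset.sum_congr rfl fun i _ => ?_
      by_cases h : 0 < x' i
      · simp only [Pi.sub_apply, hv, hu0, if_pos h]
        ring
      · have hz : x' i = 0 := le_antisymm (not_lt.1 h) (hx'nn i)
        simp [hz]
    have h := hgrad v
    rw [hgu0, hGv, hgv] at h
    exact (Real.le_log_iff_exp_le (hpos _ hψpos)).mp h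
  -- take the limit t → 0⁺
  have hx'mem : x' ∈ {y : Fin n → ℝ | ∀ i, 0 ≤ y i} := fun i => hx'nn i
  have hψtend : Filter.Tendsto ψ (nhdsWithin (0:ℝ) (Set.Ioi 0)) (nhds x') := by
    rw [tendsto_pi_nhds]
    intro i
    by_cases h : 0 < x' i
    · simpa [hψdef, h] using (tendsto_const_nhds :
        Filter.Tendsto (fun _ : ℝ => x' i) (nhdsWithin (0:ℝ) (Set.Ioi 0)) (nhds (x' i)))
    · have hz : x' i = 0 := le_antisymm (not_lt.1 h) (hx'nn i)
      have : Filter.Tendsto (fun t : ℝ => t) (nhdsWithin (0:ℝ) (Set.Ioi 0)) (nhds 0) :=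
        Filter.Tendsto.mono_right Filter.tendsto_id nhdsWithin_le_nhds
      simpa [hψdef, h, hz] using this
  have hZtend : Filter.Tendsto (fun t => Z (ψ t)) (nhdsWithin (0:ℝ) (Set.Ioi 0))
      (nhds (Z x')) := by
    have h1 : Filter.Tendsto ψ (nhdsWithin (0:ℝ) (Set.Ioi 0))
        (nhdsWithin x' {y : Fin n → ℝ | ∀ i, 0 ≤ y i}) := by
      refine tendsto_nhdsWithin_of_tendsto_nhds_of_eventually_within _ hψtend ?_
      refine Filter.eventually_of_mem self_mem_nhdsWithin ?_
      intro t ht i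
      by_cases h : 0 < x' i
      · simp only [hψdef, if_pos h]; exact h.le
      · simp only [hψdef, if_neg h]; exact (le_of_lt ht)
    exact Filter.Tendsto.comp (hcont x' hx'mem) h1
  have hZx'ge : Real.exp (Real.log (Z x) + C0) ≤ Z x' := by
    refine ge_of_tendsto hZtend (Filter.eventually_of_mem self_mem_nhdsWithin ?_)
    intro t ht
    exact hbound t ht
  have hZx'pos : 0 < Z x' := lt_of_lt_of_le (Real.exp_pos _) hZx'ge
  have hfin : Real.log (Z x) + C0 ≤ Real.log (Z x') :=
    (Real.le_log_iff_exp_le hZx'pos).mpr hZx'ge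
  rw [ge_iff_le, Real.log_div hZx'pos.ne' hZx.ne']
  have hRHS : (S / Z x) * ∑ i, x' i * Real.log (x' i / x i) = C0 := by
    rw [hC0, Finset.mul_sum]
    refine Finset.sum_congr rfl fun i _ => ?_
    by_cases h : 0 < x' i
    · rw [Real.log_div h.ne' (hx i).ne']
      ring
    · have hz : x' i = 0 := le_antisymm (not_lt.1 h) (hx'nn i)
      simp [hz]
  rw [hRHS]
  linarith
end

section
/- Let Z be a smooth knee-jerk function on the positive orthant in ℝⁿ, and let x lie in the open standard simplex Σ = {xᵢ > 0, Σ xᵢ = 1}, with Σᵢ xᵢ Z_{xᵢ}(x) > 0. Set x' = T_Z(x), where (T_Z(x))ᵢ = xᵢ Z_{xᵢ}(x)/Σⱼ xⱼ Z_{xⱼ}(x). Then Z(x') ≥ Z(x). -/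
open Real Set

/-- Decompose a vector in `Fin n → ℝ` as a sum of single-coordinate vectors. -/
lemma kj_decomp (n : ℕ) (w : Fin n → ℝ) :
    w = ∑ i, w i • (Pi.single i (1:ℝ) : Fin n → ℝ) := by
  funext j
  simp [Finset.sum_apply, Pi.single_apply, Finset.sum_ite_eq']

/-- For a smooth knee-jerk function `Z` and `x` in the open standard simplex, the
knee-jerk map does not decrease `Z`. -/
theorem stmt_11 (n : ℕ) (Z : (Fin n → ℝ) → ℝ)
    (hpos : ∀ x : Fin n → ℝ, (∀ i, 0 < x i) → 0 < Z x)
    (hmono : ∀ x y : Fin n → ℝ, (∀ i, 0 < x i) → (∀ i, 0 < y i) →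
      (∀ i, x i ≤ y i) → Z x ≤ Z y)
    (hconv : ConvexOn ℝ Set.univ
      (fun u : Fin n → ℝ => Real.log (Z (fun i => Real.exp (u i)))))
    (hsmooth : ContDiffOn ℝ (⊤ : ℕ∞) Z {x : Fin n → ℝ | ∀ i, 0 < x i})
    (hcont : ContinuousOn Z {x : Fin n → ℝ | ∀ i, 0 ≤ x i})
    (x : Fin n → ℝ) (hx : ∀ i, 0 < x i) (hxs : ∑ i, x i = 1)
    (S : ℝ) (hS : S = ∑ i, x i * fderiv ℝ Z x (Pi.single i 1)) (hSpos : 0 < S)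
    (x' : Fin n → ℝ) (hx' : ∀ i, x' i = x i * fderiv ℝ Z x (Pi.single i 1) / S) :
    Z x' ≥ Z x := by
  classical
  set P : Set (Fin n → ℝ) := {y : Fin n → ℝ | ∀ i, 0 < y i} with hPdef
  have hP : IsOpen P := by
    have : P = ⋂ i, {y : Fin n → ℝ | 0 < y i} := by ext y; simp [hPdef]
    rw [this]
    exact isOpen_iInter_of_finite fun i =>
      isOpen_lt continuous_const (continuous_apply i)
  have hxP : x ∈ P := hx
  -- Z is differentiable at x
  have hZdiff : DifferentiableAt ℝ Z x :=
    ((hsmooth.differentiableOn (by simp)) x hxP).differentiableAt (hP.mem_nhds hxP)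
  set L : (Fin n → ℝ) →L[ℝ] ℝ := fderiv ℝ Z x with hLdef
  have hZf : HasFDerivAt Z L x := hZdiff.hasFDerivAt
  set D : Fin n → ℝ := fun i => L (Pi.single i 1) with hDdef
  -- Step A: each directional derivative is nonnegative
  have hDnn : ∀ i, 0 ≤ D i := by
    intro i
    have hpath : HasDerivAt (fun t : ℝ => x + t • (Pi.single i (1:ℝ) : Fin n → ℝ))
        ((Pi.single i (1:ℝ) : Fin n → ℝ)) 0 := by
      simpa using ((hasDerivAt_id (0:ℝ)).smul_const ((Pi.single i (1:ℝ) : Fin n → ℝ))).const_add x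
    have hg : HasDerivAt (fun t : ℝ => Z (x + t • (Pi.single i (1:ℝ) : Fin n → ℝ))) (D i) 0 := by
      have := hZf.comp_hasDerivAt_of_eq (x := (0:ℝ)) hpath (by simp)
      exact this
    have htend := hasDerivAt_iff_tendsto_slope.mp hg
    have htend' : Filter.Tendsto (slope (fun t : ℝ => Z (x + t • (Pi.single i (1:ℝ) : Fin n → ℝ))) 0)
        (nhdsWithin 0 (Ioi 0)) (nhds (D i)) :=
      htend.mono_left (nhdsWithin_mono 0 (fun t ht => ne_of_gt ht))
    refine ge_of_tendsto htend' ?_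
    filter_upwards [self_mem_nhdsWithin] with t ht
    have ht0 : (0:ℝ) < t := ht
    have hnn : ∀ j, 0 ≤ (t • (Pi.single i (1:ℝ) : Fin n → ℝ)) j := by
      intro j
      rcases eq_or_ne j i with rfl | hj
      · simp [ht0.le]
      · simp [Pi.single_apply, hj]
    have hxi : ∀ j, 0 < (x + t • (Pi.single i (1:ℝ) : Fin n → ℝ)) j := by
      intro j
      simpa [Pi.add_apply] using add_pos_of_pos_of_nonneg (hx j) (hnn j)
    have hle : ∀ j, x j ≤ (x + t • (Pi.single i (1:ℝ) : Fin n → ℝ)) j := by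
      intro j
      simpa [Pi.add_apply] using le_add_of_nonneg_right (a := x j) (hnn j)
    have hZle : Z x ≤ Z (x + t • (Pi.single i (1:ℝ) : Fin n → ℝ)) := hmono x _ hx hxi hle
    have : slope (fun t : ℝ => Z (x + t • (Pi.single i (1:ℝ) : Fin n → ℝ))) 0 t
        = (Z (x + t • (Pi.single i (1:ℝ) : Fin n → ℝ)) - Z x) / t := by
      simp [slope_def_field]
    rw [this]
    exact div_nonneg (by linarith) ht0.le
  -- basic facts about x'
  have hx'nn : ∀ i, 0 ≤ x' i := by
    intro i
    rw [hx' i]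
    exact div_nonneg (mul_nonneg (hx i).le (hDnn i)) hSpos.le
  have hx'sum : ∑ i, x' i = 1 := by
    have : ∑ i, x' i = (∑ i, x i * D i) / S := by
      rw [Finset.sum_div]
      exact Finset.sum_congr rfl fun i _ => hx' i
    rw [this, ← hS, div_self hSpos.ne']
  have hxD : ∀ i, x i * D i = x' i * S := by
    intro i
    rw [hx' i]
    field_simp
    rfl
  -- the log-coordinates
  set u₀ : Fin n → ℝ := fun i => Real.log (x i) with hu₀
  have hEu₀ : (fun i => Real.exp (u₀ i)) = x := by
    funext i; simp [hu₀, Real.exp_log (hx i)]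
  set F : (Fin n → ℝ) → ℝ := fun u => Real.log (Z (fun i => Real.exp (u i))) with hF
  -- derivative of the coordinate exponential at u₀
  set M : (Fin n → ℝ) →L[ℝ] (Fin n → ℝ) :=
    ContinuousLinearMap.pi (fun i => x i • ContinuousLinearMap.proj i) with hM
  have hMapp : ∀ h : Fin n → ℝ, M h = fun i => x i * h i := by
    intro h; funext i; simp [hM]
  have hEderiv : HasFDerivAt (fun u : Fin n → ℝ => fun i => Real.exp (u i)) M u₀ := by
    apply hasFDerivAt_pi''
    intro i
    have h1 : HasDerivAt Real.exp (x i) (u₀ i) := by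
      simpa [hu₀, Real.exp_log (hx i)] using Real.hasDerivAt_exp (u₀ i)
    have h2 : HasFDerivAt (fun u : Fin n → ℝ => u i)
        (ContinuousLinearMap.proj i : (Fin n → ℝ) →L[ℝ] ℝ) u₀ :=
      (ContinuousLinearMap.proj i : (Fin n → ℝ) →L[ℝ] ℝ).hasFDerivAt
    have := h1.comp_hasFDerivAt u₀ h2
    refine this.congr_fderiv ?_
    apply ContinuousLinearMap.ext; intro h
    simp [hMapp]
  -- derivative of F at u₀
  have hZx : 0 < Z x := hpos x hx
  have hZf' : HasFDerivAt Z L (fun i => Real.exp (u₀ i)) := by rw [hEu₀]; exact hZf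
  have hlog : HasDerivAt Real.log (Z x)⁻¹ (Z (fun i => Real.exp (u₀ i))) := by
    rw [hEu₀]
    exact Real.hasDerivAt_log hZx.ne'
  have hFderiv : HasFDerivAt F ((Z x)⁻¹ • (L.comp M)) u₀ :=
    by have := hlog.comp_hasFDerivAt u₀ (hZf'.comp u₀ hEderiv); exact this
  -- value of the differential applied to a direction
  have hFd : ∀ d : Fin n → ℝ, ((Z x)⁻¹ • (L.comp M)) d
      = (Z x)⁻¹ * ∑ i, x i * d i * D i := by
    intro d
    have h1 : L (M d) = ∑ i, x i * d i * D i := by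
      rw [hMapp]
      have := kj_decomp n (fun i => x i * d i)
      calc L (fun i => x i * d i)
          = L (∑ i, (x i * d i) • (Pi.single i (1:ℝ) : Fin n → ℝ)) := by rw [← this]
        _ = ∑ i, (x i * d i) • L ((Pi.single i (1:ℝ) : Fin n → ℝ)) := by
            rw [map_sum]; exact Finset.sum_congr rfl fun i _ => by simp
        _ = ∑ i, x i * d i * D i := by simp [hDdef, smul_eq_mul]
    simp [h1, smul_eq_mul]
  -- main inequality for perturbed targets
  have key : ∀ ε : ℝ, 0 < ε → Z x ≤ Z (fun i => x' i + ε * x i) := by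
    intro ε hε
    set q : Fin n → ℝ := fun i => x' i + ε * x i with hq
    have hqpos : ∀ i, 0 < q i :=
      fun i => add_pos_of_nonneg_of_pos (hx'nn i) (mul_pos hε (hx i))
    set v : Fin n → ℝ := fun i => Real.log (q i) with hv
    set d : Fin n → ℝ := v - u₀ with hd
    -- Gibbs-type inequality: ∑ x' i * (log q i - log x i) ≥ 0
    have gibbs : 0 ≤ ∑ i, x' i * (Real.log (q i) - Real.log (x i)) := by
      have hterm : ∀ i, x' i - x i ≤ x' i * (Real.log (q i) - Real.log (x i)) := by
        intro i
        rcases eq_or_lt_of_le (hx'nn i) with h0 | hpos'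
        · rw [← h0]; simp [(hx i).le]
        · have hqge : x' i ≤ q i := by
            simp only [hq]
            nlinarith [mul_pos hε (hx i)]
          have l1 : Real.log (x' i) ≤ Real.log (q i) := Real.log_le_log hpos' hqge
          have l2 : Real.log (x i) - Real.log (x' i) ≤ x i / x' i - 1 := by
            have := Real.log_le_sub_one_of_pos (div_pos (hx i) hpos')
            rwa [Real.log_div (hx i).ne' hpos'.ne'] at this
          have l3 : 1 - x i / x' i ≤ Real.log (q i) - Real.log (x i) := by linarith
          have := mul_le_mul_of_nonneg_left l3 hpos'.le
          have hxi' : x' i * (1 - x i / x' i) = x' i - x i := by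
            field_simp
          linarith [this, hxi'.symm.le]
      calc (0:ℝ) = ∑ i, (x' i - x i) := by rw [Finset.sum_sub_distrib, hx'sum, hxs]; ring
        _ ≤ ∑ i, x' i * (Real.log (q i) - Real.log (x i)) :=
            Finset.sum_le_sum fun i _ => hterm i
    -- convexity along the segment
    set g : ℝ → ℝ := fun t => F (u₀ + t • d) with hg
    have hgconv : ConvexOn ℝ Set.univ g := by
      have hcomp := hconv.comp_affineMap (AffineMap.lineMap u₀ v)
      have : (F ∘ (AffineMap.lineMap u₀ v : ℝ →ᵃ[ℝ] (Fin n → ℝ))) = g := by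
        funext t
        simp only [Function.comp_apply, AffineMap.lineMap_apply, hg, hd]
        congr 1
        simp [vsub_eq_sub, vadd_eq_add]
        abel
      rw [this] at hcomp
      simpa using hcomp
    have hpath : HasDerivAt (fun t : ℝ => u₀ + t • d) d 0 := by
      simpa using ((hasDerivAt_id (0:ℝ)).smul_const d).const_add u₀
    have hgderiv : HasDerivAt g (((Z x)⁻¹ • (L.comp M)) d) 0 := by
      have := hFderiv.comp_hasDerivAt_of_eq (x := (0:ℝ)) hpath (by simp)
      exact this
    have hslope := hgconv.le_slope_of_hasDerivAt (mem_univ (0:ℝ)) (mem_univ (1:ℝ))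
      one_pos hgderiv
    have hslope1 : slope g 0 1 = g 1 - g 0 := by simp [slope_def_field]
    -- the directional derivative is nonnegative
    have hder_nn : 0 ≤ ((Z x)⁻¹ • (L.comp M)) d := by
      rw [hFd d]
      apply mul_nonneg (inv_nonneg.mpr hZx.le)
      have : ∀ i, x i * d i * D i = S * (x' i * (Real.log (q i) - Real.log (x i))) := by
        intro i
        have hdi : d i = Real.log (q i) - Real.log (x i) := by
          simp [hd, hv, hu₀]
        rw [hdi, mul_comm (x i) _, mul_assoc, hxD i]
        ring
      rw [Finset.sum_congr rfl fun i _ => this i, ← Finset.mul_sum]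
      exact mul_nonneg hSpos.le gibbs
    have hg01 : g 0 ≤ g 1 := by
      rw [hslope1] at hslope
      linarith
    -- translate back
    have hg0 : g 0 = Real.log (Z x) := by
      simp [hg, hF, hEu₀]
    have hg1 : g 1 = Real.log (Z q) := by
      have : u₀ + (1:ℝ) • d = v := by simp [hd]
      rw [hg]
      simp only [this]
      have : (fun i => Real.exp (v i)) = q := by
        funext i; simp [hv, Real.exp_log (hqpos i)]
      simp [hF, this]
    rw [hg0, hg1] at hg01
    have hZq : 0 < Z q := hpos q hqpos
    exact (Real.log_le_log_iff hZx hZq).mp hg01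
  -- limiting argument as ε → 0⁺
  have hx'mem : x' ∈ {y : Fin n → ℝ | ∀ i, 0 ≤ y i} := hx'nn
  have hcw : ContinuousWithinAt Z {y : Fin n → ℝ | ∀ i, 0 ≤ y i} x' := hcont x' hx'mem
  have hQtend : Filter.Tendsto (fun ε : ℝ => (fun i => x' i + ε * x i))
      (nhdsWithin 0 (Ioi 0)) (nhdsWithin x' {y : Fin n → ℝ | ∀ i, 0 ≤ y i}) := by
    rw [tendsto_nhdsWithin_iff]
    constructor
    · have hc : Continuous (fun ε : ℝ => (fun i => x' i + ε * x i)) := by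
        apply continuous_pi
        intro i
        exact continuous_const.add (continuous_id.mul continuous_const)
      have := hc.tendsto 0
      have h0 : (fun i => x' i + (0:ℝ) * x i) = x' := by funext i; ring
      rw [h0] at this
      exact this.mono_left nhdsWithin_le_nhds
    · filter_upwards [self_mem_nhdsWithin] with ε hε
      intro i
      exact add_nonneg (hx'nn i) (mul_nonneg (le_of_lt hε) (hx i).le)
  have hZtend : Filter.Tendsto (fun ε : ℝ => Z (fun i => x' i + ε * x i))
      (nhdsWithin 0 (Ioi 0)) (nhds (Z x')) := hcw.tendsto.comp hQtend
  refine ge_of_tendsto hZtend ?_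
  filter_upwards [self_mem_nhdsWithin] with ε hε
  exact key ε hε
end

section
/- Let Z be a smooth knee-jerk function on the positive orthant and x a point of the open standard simplex Σ with Σᵢ xᵢ Z_{xᵢ}(x) > 0. If x is not a fixed point of the knee-jerk mapping T_Z, then Z(T_Z(x)) > Z(x). -/
lemma aux_grad {n : ℕ} (f : (Fin n → ℝ) → ℝ) (hconv : ConvexOn ℝ Set.univ f)
    (a b : Fin n → ℝ) (L : (Fin n → ℝ) →L[ℝ] ℝ) (hL : HasFDerivAt f L a) :
    f a + L (b - a) ≤ f b := by
  have hc : HasDerivAt (fun t : ℝ => a + t • (b - a)) (b - a) 0 := by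
    simpa using ((hasDerivAt_id (0:ℝ)).smul_const (b - a)).const_add a
  have hL' : HasFDerivAt f L (a + (0:ℝ) • (b - a)) := by simpa using hL
  have hg : HasDerivAt (fun t : ℝ => f (a + t • (b - a))) (L (b - a)) 0 :=
    hL'.comp_hasDerivAt 0 hc
  have hgc : ConvexOn ℝ Set.univ (fun t : ℝ => f (a + t • (b - a))) := by
    have h := hconv.comp_affineMap (AffineMap.lineMap a b)
    have : (f ∘ (AffineMap.lineMap a b)) = fun t : ℝ => f (a + t • (b - a)) := by
      funext t; simp [AffineMap.lineMap_apply]; ring_nf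
    rw [this] at h
    simpa using h
  have := hgc.le_slope_of_hasDerivAt (Set.mem_univ 0) (Set.mem_univ 1) zero_lt_one hg
  simp [slope_def_field] at this
  rw [L.map_sub]
  linarith

/-- For a smooth knee-jerk function `Z` and `x` in the open standard simplex, if `x`
is not a fixed point of the knee-jerk map then the knee-jerk map strictly increases `Z`. -/
theorem stmt_12 (n : ℕ) (Z : (Fin n → ℝ) → ℝ)
    (hpos : ∀ x : Fin n → ℝ, (∀ i, 0 < x i) → 0 < Z x)
    (hmono : ∀ x y : Fin n → ℝ, (∀ i, 0 < x i) → (∀ i, 0 < y i) →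
      (∀ i, x i ≤ y i) → Z x ≤ Z y)
    (hconv : ConvexOn ℝ Set.univ
      (fun u : Fin n → ℝ => Real.log (Z (fun i => Real.exp (u i)))))
    (hsmooth : ContDiffOn ℝ (⊤ : ℕ∞) Z {x : Fin n → ℝ | ∀ i, 0 < x i})
    (hcont : ContinuousOn Z {x : Fin n → ℝ | ∀ i, 0 ≤ x i})
    (x : Fin n → ℝ) (hx : ∀ i, 0 < x i) (hxs : ∑ i, x i = 1)
    (S : ℝ) (hS : S = ∑ i, x i * fderiv ℝ Z x (Pi.single i 1)) (hSpos : 0 < S)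
    (x' : Fin n → ℝ) (hx' : ∀ i, x' i = x i * fderiv ℝ Z x (Pi.single i 1) / S)
    (hne : x' ≠ x) :
    Z x' > Z x := by
  set L := fderiv ℝ Z x with hL
  set D : Fin n → ℝ := fun i => L (Pi.single i 1) with hDdef
  have hZx : 0 < Z x := hpos x hx
  -- openness of the positive orthant
  have hopen : IsOpen {x : Fin n → ℝ | ∀ i, 0 < x i} := by
    have : {x : Fin n → ℝ | ∀ i, 0 < x i} = ⋂ i, {x : Fin n → ℝ | 0 < x i} := by
      ext y; simp
    rw [this]
    exact isOpen_iInter_of_finite fun i =>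
      isOpen_lt continuous_const (continuous_apply i)
  -- Z is differentiable at x with derivative L
  have hZd : HasFDerivAt Z L x := by
    have h1 : ContDiffAt ℝ (⊤ : ℕ∞) Z x := hsmooth.contDiffAt (hopen.mem_nhds hx)
    exact (h1.differentiableAt (by simp)).hasFDerivAt
  -- derivatives are nonnegative
  have hD : ∀ i, 0 ≤ D i := by
    intro i
    have hc : HasDerivAt (fun s : ℝ => x + s • (Pi.single i 1 : Fin n → ℝ))
        (Pi.single i 1) 0 := by
      simpa using ((hasDerivAt_id (0:ℝ)).smul_const (Pi.single i 1 : Fin n → ℝ)).const_add x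
    have hZd0 : HasFDerivAt Z L (x + (0:ℝ) • (Pi.single i 1 : Fin n → ℝ)) := by simpa using hZd
    have hphi : HasDerivAt (fun s : ℝ => Z (x + s • (Pi.single i 1 : Fin n → ℝ))) (D i) 0 :=
      hZd0.comp_hasDerivAt 0 hc
    rw [hasDerivAt_iff_tendsto_slope] at hphi
    have h2 : Filter.Tendsto (slope (fun s : ℝ => Z (x + s • (Pi.single i 1 : Fin n → ℝ))) 0)
        (nhdsWithin 0 (Set.Ioi 0)) (nhds (D i)) :=
      hphi.mono_left (nhdsWithin_mono _ (fun s hs => ne_of_gt hs))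
    refine ge_of_tendsto h2 ?_
    filter_upwards [self_mem_nhdsWithin] with s hs
    have hs' : (0:ℝ) < s := hs
    have hsingle : ∀ j, (0:ℝ) ≤ (Pi.single i 1 : Fin n → ℝ) j := by
      intro j
      rw [Pi.single_apply]
      split <;> norm_num
    have hle : Z x ≤ Z (x + s • (Pi.single i 1 : Fin n → ℝ)) := by
      refine hmono x _ hx (fun j => ?_) (fun j => ?_)
      · have h3 : (0:ℝ) ≤ s * (Pi.single i 1 : Fin n → ℝ) j :=
          mul_nonneg hs'.le (hsingle j)
        simp only [Pi.add_apply, Pi.smul_apply, smul_eq_mul]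
        linarith [hx j]
      · have h3 : (0:ℝ) ≤ s * (Pi.single i 1 : Fin n → ℝ) j :=
          mul_nonneg hs'.le (hsingle j)
        simp only [Pi.add_apply, Pi.smul_apply, smul_eq_mul]
        linarith
    have h0 : x + (0:ℝ) • (Pi.single i 1 : Fin n → ℝ) = x := by simp
    rw [slope_def_field, h0]
    have : s - 0 = s := by ring
    rw [this]
    exact div_nonneg (sub_nonneg.mpr hle) hs'.le
  have hx'nonneg : ∀ i, 0 ≤ x' i := by
    intro i; rw [hx' i]
    exact div_nonneg (mul_nonneg (hx i).le (hD i)) hSpos.le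
  have hx's : ∑ i, x' i = 1 := by
    have : ∑ i, x' i = (∑ i, x i * D i) / S := by
      rw [Finset.sum_div]; exact Finset.sum_congr rfl fun i _ => hx' i
    rw [this, ← hS, div_self hSpos.ne']
  have hxD : ∀ i, x i * D i = S * x' i := by
    intro i; rw [hx' i]; field_simp; rfl
  -- L of any vector as a sum
  have hLsum : ∀ v : Fin n → ℝ, L v = ∑ i, v i * D i := by
    intro v
    have hv : v = ∑ i, v i • (Pi.single i 1 : Fin n → ℝ) := by
      funext j
      simp [Pi.single_apply, Finset.sum_apply]
    conv_lhs => rw [hv]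
    rw [map_sum]
    exact Finset.sum_congr rfl fun i _ => by rw [map_smul]; rfl
  -- the key inequality at interior points
  have key : ∀ y : Fin n → ℝ, (∀ i, 0 < y i) →
      Z x * Real.exp ((Z x)⁻¹ * ∑ i, (S * x' i) * (Real.log (y i) - Real.log (x i)))
        ≤ Z y := by
    intro y hy
    set u₀ : Fin n → ℝ := fun i => Real.log (x i) with hu₀
    set u₁ : Fin n → ℝ := fun i => Real.log (y i) with hu₁
    have hEx : (fun i => Real.exp (u₀ i)) = x := funext fun j => Real.exp_log (hx j)
    have hEy : (fun i => Real.exp (u₁ i)) = y := funext fun j => Real.exp_log (hy j)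
    set M : (Fin n → ℝ) →L[ℝ] (Fin n → ℝ) :=
      ContinuousLinearMap.pi (fun i => x i • ContinuousLinearMap.proj i) with hM
    have hE : HasFDerivAt (fun u : Fin n → ℝ => (fun i => Real.exp (u i))) M u₀ := by
      apply hasFDerivAt_pi''
      intro i
      have h1 : HasDerivAt Real.exp (x i) (u₀ i) := by
        simpa [hu₀, Real.exp_log (hx i)] using Real.hasDerivAt_exp (u₀ i)
      have h2 := h1.comp_hasFDerivAt u₀
        (ContinuousLinearMap.proj (R := ℝ) (φ := fun _ : Fin n => ℝ) i).hasFDerivAt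
      convert h2 using 1
      case e'_8 => rfl
      case e'_11 => rfl
      case e'_12 => ext v; simp [hM]
    have hZdE : HasFDerivAt Z L ((fun i => Real.exp (u₀ i))) := by rw [hEx]; exact hZd
    have hZE : HasFDerivAt (fun u : Fin n → ℝ => Z (fun i => Real.exp (u i)))
        (L.comp M) u₀ := hZdE.comp u₀ hE
    have hZE0 : (0:ℝ) < Z (fun i => Real.exp (u₀ i)) := by rw [hEx]; exact hZx
    have hlog : HasDerivAt Real.log (Z (fun i => Real.exp (u₀ i)))⁻¹
        (Z (fun i => Real.exp (u₀ i))) := Real.hasDerivAt_log hZE0.ne'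
    have hf : HasFDerivAt (fun u : Fin n → ℝ => Real.log (Z (fun i => Real.exp (u i))))
        ((Z (fun i => Real.exp (u₀ i)))⁻¹ • (L.comp M)) u₀ :=
      by have := hlog.comp_hasFDerivAt u₀ hZE; exact this
    have hgi := aux_grad _ hconv u₀ u₁ _ hf
    rw [hEx, hEy] at hgi
    have hFval : ((Z x)⁻¹ • (L.comp M)) (u₁ - u₀)
        = (Z x)⁻¹ * ∑ i, (S * x' i) * (Real.log (y i) - Real.log (x i)) := by
      have hMv : M (u₁ - u₀) = fun i => x i * (Real.log (y i) - Real.log (x i)) := by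
        funext j
        simp [hM, ContinuousLinearMap.proj, hu₀, hu₁]
      simp only [ContinuousLinearMap.smul_apply, ContinuousLinearMap.comp_apply, hMv,
        smul_eq_mul]
      congr 1
      rw [hLsum]
      refine Finset.sum_congr rfl fun i _ => ?_
      linear_combination (Real.log (y i) - Real.log (x i)) * hxD i
    rw [hFval] at hgi
    calc Z x * Real.exp ((Z x)⁻¹ * ∑ i, (S * x' i) * (Real.log (y i) - Real.log (x i)))
        = Real.exp (Real.log (Z x)
            + (Z x)⁻¹ * ∑ i, (S * x' i) * (Real.log (y i) - Real.log (x i))) := by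
          rw [Real.exp_add, Real.exp_log hZx]
      _ ≤ Real.exp (Real.log (Z y)) := Real.exp_le_exp.mpr hgi
      _ = Z y := Real.exp_log (hpos y hy)
  -- Gibbs: strict positivity of the divergence
  have hK : 0 < ∑ i, x' i * (Real.log (x' i) - Real.log (x i)) := by
    have hlt : ∑ i, x' i * (Real.log (x i) - Real.log (x' i)) < ∑ i, (x i - x' i) := by
      obtain ⟨i₀, hi₀⟩ : ∃ i, x' i ≠ x i := by
        by_contra h
        push_neg at h
        exact hne (funext h)
      refine Finset.sum_lt_sum (fun i _ => ?_) ⟨i₀, Finset.mem_univ i₀, ?_⟩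
      · rcases eq_or_lt_of_le (hx'nonneg i) with h0 | h0
        · simp [← h0]
          exact (hx i).le
        · have hratio : (0:ℝ) < x i / x' i := div_pos (hx i) h0
          have := Real.log_le_sub_one_of_pos hratio
          rw [Real.log_div (hx i).ne' h0.ne'] at this
          have h2 : x' i * (Real.log (x i) - Real.log (x' i)) ≤ x' i * (x i / x' i - 1) :=
            mul_le_mul_of_nonneg_left this h0.le
          calc x' i * (Real.log (x i) - Real.log (x' i)) ≤ x' i * (x i / x' i - 1) := h2
            _ = x i - x' i := by field_simp
      · rcases eq_or_lt_of_le (hx'nonneg i₀) with h0 | h0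
        · rw [← h0]
          simp
          have := hx i₀
          rw [← h0] at hi₀
          linarith
        · have hratio : (0:ℝ) < x i₀ / x' i₀ := div_pos (hx i₀) h0
          have hne1 : x i₀ / x' i₀ ≠ 1 := by
            intro h
            rw [div_eq_one_iff_eq h0.ne'] at h
            exact hi₀ h.symm
          have := Real.log_lt_sub_one_of_pos hratio hne1
          rw [Real.log_div (hx i₀).ne' h0.ne'] at this
          have h2 : x' i₀ * (Real.log (x i₀) - Real.log (x' i₀)) < x' i₀ * (x i₀ / x' i₀ - 1) :=
            mul_lt_mul_of_pos_left this h0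
          calc x' i₀ * (Real.log (x i₀) - Real.log (x' i₀)) < x' i₀ * (x i₀ / x' i₀ - 1) := h2
            _ = x i₀ - x' i₀ := by field_simp
    have hsum0 : ∑ i, (x i - x' i) = 0 := by
      rw [Finset.sum_sub_distrib, hxs, hx's, sub_self]
    have hneg : ∑ i, x' i * (Real.log (x i) - Real.log (x' i)) < 0 := by
      rw [hsum0] at hlt; exact hlt
    have heq : ∑ i, x' i * (Real.log (x' i) - Real.log (x i))
        = -∑ i, x' i * (Real.log (x i) - Real.log (x' i)) := by
      rw [← Finset.sum_neg_distrib]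
      exact Finset.sum_congr rfl fun i _ => by ring
    rw [heq]
    linarith
  -- limit along the segment
  set y : ℝ → (Fin n → ℝ) := fun t => fun i => (1 - t) * x i + t * x' i with hy
  have hyi : ∀ t ∈ Set.Ioo (0:ℝ) 1, ∀ i, 0 < y t i := by
    intro t ht i
    have h1 : 0 < (1 - t) * x i := mul_pos (by linarith [ht.2]) (hx i)
    have h2 : 0 ≤ t * x' i := mul_nonneg ht.1.le (hx'nonneg i)
    simp only [hy]
    linarith
  have hIoo : Set.Ioo (0:ℝ) 1 ∈ nhdsWithin (1:ℝ) (Set.Iio 1) :=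
    Ioo_mem_nhdsLT_of_mem ⟨by norm_num, le_refl 1⟩
  have hyt : Filter.Tendsto y (nhdsWithin 1 (Set.Iio 1)) (nhds x') := by
    have hcy : Continuous y := by
      apply continuous_pi
      intro i
      fun_prop
    have hy1 : y 1 = x' := by funext i; simp [hy]
    have h1 := hcy.tendsto 1
    rw [hy1] at h1
    exact h1.mono_left nhdsWithin_le_nhds
  have hZy : Filter.Tendsto (fun t => Z (y t)) (nhdsWithin 1 (Set.Iio 1)) (nhds (Z x')) := by
    have hcw : ContinuousWithinAt Z {x : Fin n → ℝ | ∀ i, 0 ≤ x i} x' :=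
      hcont x' (fun i => hx'nonneg i)
    refine hcw.tendsto.comp ?_
    rw [tendsto_nhdsWithin_iff]
    refine ⟨hyt, ?_⟩
    filter_upwards [hIoo] with t ht
    exact fun i => (hyi t ht i).le
  have hsumt : Filter.Tendsto
      (fun t => ∑ i, (S * x' i) * (Real.log (y t i) - Real.log (x i)))
      (nhdsWithin 1 (Set.Iio 1))
      (nhds (∑ i, (S * x' i) * (Real.log (x' i) - Real.log (x i)))) := by
    apply tendsto_finset_sum
    intro i _
    rcases eq_or_lt_of_le (hx'nonneg i) with h0 | h0
    · simp only [← h0, mul_zero, zero_mul]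
      exact tendsto_const_nhds
    · have hyi' : Filter.Tendsto (fun t => y t i) (nhdsWithin 1 (Set.Iio 1)) (nhds (x' i)) := by
        have hcy : Continuous (fun t => y t i) := by fun_prop
        have h1 := hcy.tendsto 1
        have hy1 : y 1 i = x' i := by simp [hy]
        rw [hy1] at h1
        exact h1.mono_left nhdsWithin_le_nhds
      have hlog := (Real.continuousAt_log h0.ne').tendsto.comp hyi'
      exact tendsto_const_nhds.mul (hlog.sub tendsto_const_nhds)
  have hRHS : Filter.Tendsto
      (fun t => Z x * Real.exp ((Z x)⁻¹ * ∑ i, (S * x' i) * (Real.log (y t i) - Real.log (x i))))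
      (nhdsWithin 1 (Set.Iio 1))
      (nhds (Z x * Real.exp ((Z x)⁻¹ * ∑ i, (S * x' i) * (Real.log (x' i) - Real.log (x i))))) :=
    tendsto_const_nhds.mul
      ((Real.continuous_exp.tendsto _).comp (tendsto_const_nhds.mul hsumt))
  have hle : Z x * Real.exp ((Z x)⁻¹ * ∑ i, (S * x' i) * (Real.log (x' i) - Real.log (x i)))
      ≤ Z x' := by
    refine le_of_tendsto_of_tendsto hRHS hZy ?_
    filter_upwards [hIoo] with t ht
    exact key (y t) (hyi t ht)
  have hsumeq : ∑ i, (S * x' i) * (Real.log (x' i) - Real.log (x i))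
      = S * ∑ i, x' i * (Real.log (x' i) - Real.log (x i)) := by
    rw [Finset.mul_sum]
    exact Finset.sum_congr rfl fun i _ => by ring
  have hKS : 0 < (Z x)⁻¹ * ∑ i, (S * x' i) * (Real.log (x' i) - Real.log (x i)) := by
    rw [hsumeq]
    exact mul_pos (inv_pos.mpr hZx) (mul_pos hSpos hK)
  have hexp : 1 < Real.exp ((Z x)⁻¹ * ∑ i, (S * x' i) * (Real.log (x' i) - Real.log (x i))) := by
    calc (1:ℝ) = Real.exp 0 := Real.exp_zero.symm
      _ < _ := Real.exp_lt_exp.mpr hKS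
  calc Z x = Z x * 1 := (mul_one _).symm
    _ < Z x * Real.exp ((Z x)⁻¹ * ∑ i, (S * x' i) * (Real.log (x' i) - Real.log (x i))) :=
        (mul_lt_mul_of_pos_left hexp hZx)
    _ ≤ Z x' := hle
end

section
/- Generalized knee-jerk inequality with weights: let a₁,…,aₙ > 0, let Z be a smooth knee-jerk function on the positive orthant, let x be in the positive orthant with Σᵢ xᵢ Z_{xᵢ}(x) > 0, and set x'ᵢ = (xᵢ Z_{xᵢ}(x)/aᵢ)/Σⱼ xⱼ Z_{xⱼ}(x). Then log(Z(x')/Z(x)) ≥ (Σᵢ xᵢ Z_{xᵢ}(x)/Z(x)) · Σᵢ aᵢ x'ᵢ log(x'ᵢ/xᵢ), and x' lies in the closure of the weighted simplex Σ_a = {x : xᵢ > 0, Σᵢ aᵢxᵢ = 1}. -/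
/-- Generalized knee-jerk inequality with weights `a₁,…,aₙ > 0`:
the image point `x'` lies in the closure of the weighted simplex `Σ_a`, and the
weighted knee-jerk inequality holds. -/
theorem stmt_15 (n : ℕ) (a : Fin n → ℝ) (ha : ∀ i, 0 < a i)
    (Z : (Fin n → ℝ) → ℝ)
    (hpos : ∀ x : Fin n → ℝ, (∀ i, 0 < x i) → 0 < Z x)
    (hmono : ∀ x y : Fin n → ℝ, (∀ i, 0 < x i) → (∀ i, 0 < y i) →
      (∀ i, x i ≤ y i) → Z x ≤ Z y)
    (hconv : ConvexOn ℝ Set.univ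
      (fun u : Fin n → ℝ => Real.log (Z (fun i => Real.exp (u i)))))
    (hsmooth : ContDiffOn ℝ (⊤ : ℕ∞) Z {x : Fin n → ℝ | ∀ i, 0 < x i})
    (hcont : ContinuousOn Z {x : Fin n → ℝ | ∀ i, 0 ≤ x i})
    (x : Fin n → ℝ) (hx : ∀ i, 0 < x i)
    (S : ℝ) (hS : S = ∑ i, x i * fderiv ℝ Z x (Pi.single i 1)) (hSpos : 0 < S)
    (x' : Fin n → ℝ)
    (hx' : ∀ i, x' i = (x i * fderiv ℝ Z x (Pi.single i 1) / a i) / S) :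
    Real.log (Z x' / Z x) ≥
        (S / Z x) * ∑ i, a i * x' i * Real.log (x' i / x i) ∧
      (∀ i, 0 ≤ x' i) ∧ ∑ i, a i * x' i = 1 := by
  classical
  set L : Fin n → ℝ := fun i => fderiv ℝ Z x (Pi.single i 1) with hLdef
  have hZx : 0 < Z x := hpos x hx
  -- differentiability of Z at x
  have hopen : IsOpen {x : Fin n → ℝ | ∀ i, 0 < x i} := by
    have : {x : Fin n → ℝ | ∀ i, 0 < x i} = ⋂ i, (fun y : Fin n → ℝ => y i) ⁻¹' Set.Ioi 0 := by
      ext y; simp [Set.mem_iInter]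
    rw [this]
    exact isOpen_iInter_of_finite fun i => (continuous_apply i).isOpen_preimage _ isOpen_Ioi
  have hdiff : DifferentiableAt ℝ Z x :=
    (hsmooth.differentiableOn (by norm_num)).differentiableAt (hopen.mem_nhds hx)
  -- nonnegativity of partial derivatives
  have hL : ∀ i, 0 ≤ L i := by
    intro i
    set f : ℝ → ℝ := fun t => Z (x + t • (Pi.single i 1 : Fin n → ℝ)) with hf
    have hcurve : HasDerivAt (fun t : ℝ => x + t • (Pi.single i 1 : Fin n → ℝ))
        (Pi.single i 1 : Fin n → ℝ) 0 := by
      simpa using ((hasDerivAt_id (0:ℝ)).smul_const (Pi.single i 1 : Fin n → ℝ)).const_add x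
    have hd : HasDerivAt f (L i) 0 := by
      have h0 : x + (0:ℝ) • (Pi.single i 1 : Fin n → ℝ) = x := by simp
      have hZ : HasFDerivAt Z (fderiv ℝ Z x) (x + (0:ℝ) • (Pi.single i 1 : Fin n → ℝ)) := by
        rw [h0]; exact hdiff.hasFDerivAt
      exact hZ.comp_hasDerivAt 0 hcurve
    have hslope : ∀ᶠ t in nhdsWithin (0:ℝ) {0}ᶜ, 0 ≤ slope f 0 t := by
      have hmem : Set.Ioo (-(x i)) (x i) ∈ nhdsWithin (0:ℝ) {0}ᶜ :=
        nhdsWithin_le_nhds (Ioo_mem_nhds (by linarith [hx i]) (hx i))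
      filter_upwards [hmem, self_mem_nhdsWithin] with t ht ht0
      have ht0' : t ≠ 0 := ht0
      have hposc : ∀ j, 0 < (x + t • (Pi.single i 1 : Fin n → ℝ)) j := by
        intro j
        by_cases hji : j = i
        · subst hji; simp only [Pi.add_apply, Pi.smul_apply, Pi.single_eq_same, smul_eq_mul,
            mul_one]
          linarith [ht.1]
        · simp [Pi.single_eq_of_ne hji, hx j]
      rw [slope_def_field, sub_zero]
      rcases lt_or_gt_of_ne ht0' with h | h
      · apply div_nonneg_of_nonpos _ h.le
        have : Z (x + t • (Pi.single i 1 : Fin n → ℝ)) ≤ Z x := by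
          apply hmono _ _ hposc hx
          intro j
          by_cases hji : j = i
          · subst hji; simp only [Pi.add_apply, Pi.smul_apply, Pi.single_eq_same, smul_eq_mul,
              mul_one]; linarith
          · simp [Pi.single_eq_of_ne hji]
        simp only [hf]; simpa using this
      · apply div_nonneg _ h.le
        have : Z x ≤ Z (x + t • (Pi.single i 1 : Fin n → ℝ)) := by
          apply hmono _ _ hx hposc
          intro j
          by_cases hji : j = i
          · subst hji; simp only [Pi.add_apply, Pi.smul_apply, Pi.single_eq_same, smul_eq_mul,
              mul_one]; linarith
          · simp [Pi.single_eq_of_ne hji]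
        simp only [hf]; simpa using this
    exact ge_of_tendsto (hasDerivAt_iff_tendsto_slope.1 hd) hslope
  -- basic facts about x'
  have hx'nonneg : ∀ i, 0 ≤ x' i := by
    intro i
    rw [hx' i]
    exact div_nonneg (div_nonneg (mul_nonneg (hx i).le (hL i)) (ha i).le) hSpos.le
  have hxL : ∀ i, x i * L i = S * (a i * x' i) := by
    intro i
    rw [hx' i, hLdef]
    field_simp [(ha i).ne', hSpos.ne']
  have hsum : ∑ i, a i * x' i = 1 := by
    have : ∑ i, a i * x' i = ∑ i, x i * L i / S := by
      apply Finset.sum_congr rfl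
      intro i _
      rw [hx' i, hLdef]
      field_simp [(ha i).ne', hSpos.ne']
    rw [this, ← Finset.sum_div, ← hS, div_self hSpos.ne']
  -- linear expansion of the derivative
  have hexpand : ∀ c : Fin n → ℝ, fderiv ℝ Z x c = ∑ i, c i * L i := by
    intro c
    have := LinearMap.pi_apply_eq_sum_univ (fderiv ℝ Z x : (Fin n → ℝ) →ₗ[ℝ] ℝ) c
    simp only [ContinuousLinearMap.coe_coe] at this
    rw [this]
    apply Finset.sum_congr rfl
    intro i _
    have : (fun j => if i = j then (1:ℝ) else 0) = (Pi.single i 1 : Fin n → ℝ) := by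
      funext j; simp [Pi.single_apply, eq_comm]
    rw [this, smul_eq_mul]
  -- core convexity inequality, for any positive y
  have hcore : ∀ y : Fin n → ℝ, (∀ i, 0 < y i) →
      Real.log (Z x) + (Z x)⁻¹ *
        fderiv ℝ Z x (fun i => x i * (Real.log (y i) - Real.log (x i))) ≤ Real.log (Z y) := by
    intro y hy
    set g : (Fin n → ℝ) → ℝ := fun u => Real.log (Z (fun i => Real.exp (u i))) with hg
    set u : Fin n → ℝ := fun i => Real.log (x i) with hu
    set w : Fin n → ℝ := fun i => Real.log (y i) with hw
    set d : Fin n → ℝ := fun i => w i - u i with hd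
    set φ : ℝ → (Fin n → ℝ) := fun t => fun i => Real.exp (u i + t * d i) with hφ
    have hφ0 : φ 0 = x := by
      funext i; simp [hφ, hu, Real.exp_log (hx i)]
    have hφ1 : φ 1 = y := by
      funext i; simp [hφ, hd, hw, Real.exp_log (hy i)]
    have hcurve : HasDerivAt φ (fun i => x i * d i) 0 := by
      rw [hasDerivAt_pi]
      intro i
      have h1 : HasDerivAt (fun t : ℝ => u i + t * d i) (d i) 0 := by
        simpa using (hasDerivAt_mul_const (d i)).const_add (u i)
      have := (Real.hasDerivAt_exp (u i + 0 * d i)).comp 0 h1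
      refine this.congr_deriv ?_
      simp [hu, Real.exp_log (hx i)]
    have hZφ : HasDerivAt (fun t => Z (φ t)) (fderiv ℝ Z x (fun i => x i * d i)) 0 := by
      have hZ : HasFDerivAt Z (fderiv ℝ Z x) (φ 0) := by rw [hφ0]; exact hdiff.hasFDerivAt
      exact hZ.comp_hasDerivAt 0 hcurve
    have hZφ0 : Z (φ 0) = Z x := by rw [hφ0]
    have hlog : HasDerivAt (fun t => Real.log (Z (φ t)))
        ((Z x)⁻¹ * fderiv ℝ Z x (fun i => x i * d i)) 0 := by
      have hne : Z (φ 0) ≠ 0 := by rw [hZφ0]; exact hZx.ne'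
      have := (Real.hasDerivAt_log hne).comp 0 hZφ
      rw [hZφ0] at this
      exact this
    have hcomp : (g ∘ (AffineMap.lineMap u w : ℝ →ᵃ[ℝ] (Fin n → ℝ))) =
        fun t => Real.log (Z (φ t)) := by
      funext t
      simp only [Function.comp_apply, hg, hφ]
      have : (fun i => Real.exp ((AffineMap.lineMap u w : ℝ →ᵃ[ℝ] (Fin n → ℝ)) t i)) =
          fun i => Real.exp (u i + t * d i) := by
        funext i
        congr 1
        simp [AffineMap.lineMap_apply, hd]
        ring
      rw [this]
    have hconv1 : ConvexOn ℝ Set.univ (fun t => Real.log (Z (φ t))) := by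
      rw [← hcomp]
      simpa using hconv.comp_affineMap (AffineMap.lineMap u w : ℝ →ᵃ[ℝ] (Fin n → ℝ))
    have hslope := hconv1.le_slope_of_hasDerivAt (Set.mem_univ (0:ℝ)) (Set.mem_univ 1)
      zero_lt_one hlog
    rw [slope_def_field] at hslope
    simp only [hφ0, hφ1, sub_zero, div_one] at hslope
    have harg : (fun i => x i * d i) = fun i => x i * (Real.log (y i) - Real.log (x i)) := rfl
    rw [harg] at hslope
    linarith [hslope]
  -- the target sum
  set T : ℝ := ∑ i, a i * x' i * Real.log (x' i / x i) with hT
  -- epsilon cutoff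
  set F : Finset ℝ := insert 1 ((Finset.univ.filter (fun i => 0 < x' i)).image x') with hF
  have hFne : F.Nonempty := ⟨1, Finset.mem_insert_self _ _⟩
  set ε₀ : ℝ := F.min' hFne with hε₀
  have hε₀pos : 0 < ε₀ := by
    have hall : ∀ z ∈ F, 0 < z := by
      intro z hz
      rw [hF] at hz
      rcases Finset.mem_insert.1 hz with h | h
      · rw [h]; norm_num
      · obtain ⟨i, hi, hix⟩ := Finset.mem_image.1 h
        rw [← hix]; exact (Finset.mem_filter.1 hi).2
    exact hall _ (F.min'_mem hFne)
  have hε₀le : ∀ i, 0 < x' i → ε₀ ≤ x' i := by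
    intro i hi
    apply Finset.min'_le
    rw [hF]
    exact Finset.mem_insert_of_mem (Finset.mem_image.2 ⟨i, Finset.mem_filter.2 ⟨Finset.mem_univ i, hi⟩, rfl⟩)
  -- the bound for perturbed points
  set R : ℝ := Real.log (Z x) + (Z x)⁻¹ * (S * T) with hR
  set y : ℝ → (Fin n → ℝ) := fun ε => fun i => max (x' i) ε with hy
  have hbound : ∀ ε ∈ Set.Ioc (0:ℝ) ε₀, Real.exp R ≤ Z (y ε) := by
    intro ε hε
    have hyε : ∀ i, 0 < y ε i := fun i => lt_of_lt_of_le hε.1 (le_max_right _ _)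
    have := hcore (y ε) hyε
    rw [hexpand] at this
    have hsumeq : ∑ i, x i * (Real.log (y ε i) - Real.log (x i)) * L i = S * T := by
      rw [hT, Finset.mul_sum]
      apply Finset.sum_congr rfl
      intro i _
      rcases eq_or_lt_of_le (hx'nonneg i) with h0 | h0
      · have hax : a i * x' i = 0 := by rw [← h0, mul_zero]
        have hxl : x i * L i = 0 := by rw [hxL i, hax, mul_zero]
        calc x i * (Real.log (y ε i) - Real.log (x i)) * L i
            = (x i * L i) * (Real.log (y ε i) - Real.log (x i)) := by ring
          _ = 0 := by rw [hxl, zero_mul]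
          _ = S * (a i * x' i * Real.log (x' i / x i)) := by rw [hax]; ring
      · have hyi : y ε i = x' i := max_eq_left (le_trans hε.2 (hε₀le i h0))
        rw [hyi, ← Real.log_div h0.ne' (hx i).ne']
        calc x i * Real.log (x' i / x i) * L i
            = (x i * L i) * Real.log (x' i / x i) := by ring
          _ = S * (a i * x' i * Real.log (x' i / x i)) := by rw [hxL i]; ring
    rw [hsumeq] at this
    have hZy : 0 < Z (y ε) := hpos _ hyε
    calc Real.exp R ≤ Real.exp (Real.log (Z (y ε))) := Real.exp_le_exp.2 (by rw [hR]; linarith)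
      _ = Z (y ε) := Real.exp_log hZy
  -- limit as ε → 0⁺
  have hx'mem : x' ∈ {x : Fin n → ℝ | ∀ i, 0 ≤ x i} := hx'nonneg
  have htend : Filter.Tendsto (fun ε => Z (y ε)) (nhdsWithin 0 (Set.Ioi 0)) (nhds (Z x')) := by
    have hyc : Filter.Tendsto y (nhdsWithin 0 (Set.Ioi 0)) (nhds x') := by
      apply tendsto_pi_nhds.2
      intro i
      have : Filter.Tendsto (fun ε : ℝ => max (x' i) ε) (nhds 0) (nhds (max (x' i) 0)) :=
        (continuous_const.max continuous_id).tendsto 0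
      rw [max_eq_left (hx'nonneg i)] at this
      exact this.mono_left nhdsWithin_le_nhds
    have hZc : ContinuousWithinAt Z {x : Fin n → ℝ | ∀ i, 0 ≤ x i} x' := hcont x' hx'mem
    apply hZc.tendsto.comp
    rw [tendsto_nhdsWithin_iff]
    refine ⟨hyc, ?_⟩
    filter_upwards with ε
    intro i
    exact le_trans (hx'nonneg i) (le_max_left _ _)
  have hZx' : Real.exp R ≤ Z x' := by
    apply ge_of_tendsto htend
    filter_upwards [Ioc_mem_nhdsGT_of_mem ⟨le_refl 0, hε₀pos⟩] with ε hε
    exact hbound ε hε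
  have hZx'pos : 0 < Z x' := lt_of_lt_of_le (Real.exp_pos R) hZx'
  refine ⟨?_, hx'nonneg, hsum⟩
  have hlogZx' : R ≤ Real.log (Z x') := by
    calc R = Real.log (Real.exp R) := (Real.log_exp R).symm
      _ ≤ Real.log (Z x') := Real.log_le_log (Real.exp_pos R) hZx'
  rw [Real.log_div hZx'pos.ne' hZx.ne']
  have : (S / Z x) * T = (Z x)⁻¹ * (S * T) := by
    rw [div_eq_mul_inv]; ring
  rw [ge_iff_le, this]
  rw [hR] at hlogZx'
  linarith
end

section
/- Product-of-simplices knee-jerk inequality: let Z be a smooth knee-jerk function of variables x_{i,j} (1 ≤ i ≤ k, 1 ≤ j ≤ nᵢ), and let x be in the positive orthant with Σⱼ x_{i,j} Z_{x_{i,j}}(x) > 0 for each i. Define x'_{i,j} = x_{i,j} Z_{x_{i,j}}(x)/Σⱼ x_{i,j} Z_{x_{i,j}}(x). Then log(Z(x')/Z(x)) ≥ Σᵢ (Σⱼ x_{i,j} Z_{x_{i,j}}(x)/Z(x)) · Σⱼ x'_{i,j} log(x'_{i,j}/x_{i,j}). -/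
open Set Filter Topology

lemma grad_ineq_aux {E : Type*} [NormedAddCommGroup E] [NormedSpace ℝ E]
    {F : E → ℝ} (hF : ConvexOn ℝ Set.univ F) {u v : E} {L : E →L[ℝ] ℝ}
    (hL : HasFDerivAt F L u) : F u + L (v - u) ≤ F v := by
  have hline : HasDerivAt (fun t : ℝ => AffineMap.lineMap u v t) (v - u) 0 := by
    have : (fun t : ℝ => AffineMap.lineMap u v t) = fun t : ℝ => t • (v - u) + u := by
      funext t
      simp [AffineMap.lineMap_apply_module]
      module
    rw [this]
    simpa using ((hasDerivAt_id (0:ℝ)).smul_const (v - u)).add_const u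
  have hg : HasDerivAt (F ∘ fun t : ℝ => AffineMap.lineMap u v t) (L (v - u)) 0 := by
    refine hL.comp_hasDerivAt_of_eq 0 hline ?_
    simp
  have hgc : ConvexOn ℝ Set.univ (F ∘ (AffineMap.lineMap u v : ℝ →ᵃ[ℝ] E)) := by
    simpa using hF.comp_affineMap (AffineMap.lineMap u v)
  have := hgc.le_slope_of_hasDerivAt (Set.mem_univ (0:ℝ)) (Set.mem_univ (1:ℝ)) one_pos hg
  rw [slope_def_field] at this
  simp only [Function.comp, AffineMap.lineMap_apply_zero, AffineMap.lineMap_apply_one] at this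
  simp only [sub_zero, div_one] at this
  linarith


/-- Product-of-simplices knee-jerk inequality.  The variables are indexed by pairs
`⟨i, j⟩` with `i : Fin k` and `j : Fin (m i)`. -/
theorem stmt_16 (k : ℕ) (m : Fin k → ℕ)
    (Z : (((i : Fin k) × Fin (m i)) → ℝ) → ℝ)
    (hpos : ∀ x : ((i : Fin k) × Fin (m i)) → ℝ, (∀ p, 0 < x p) → 0 < Z x)
    (hmono : ∀ x y : ((i : Fin k) × Fin (m i)) → ℝ, (∀ p, 0 < x p) → (∀ p, 0 < y p) →
      (∀ p, x p ≤ y p) → Z x ≤ Z y)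
    (hconv : ConvexOn ℝ Set.univ
      (fun u : ((i : Fin k) × Fin (m i)) → ℝ => Real.log (Z (fun p => Real.exp (u p)))))
    (hsmooth : ContDiffOn ℝ (⊤ : ℕ∞) Z {x : ((i : Fin k) × Fin (m i)) → ℝ | ∀ p, 0 < x p})
    (hcont : ContinuousOn Z {x : ((i : Fin k) × Fin (m i)) → ℝ | ∀ p, 0 ≤ x p})
    (x : ((i : Fin k) × Fin (m i)) → ℝ) (hx : ∀ p, 0 < x p)
    (S : Fin k → ℝ)
    (hS : ∀ i, S i = ∑ j, x ⟨i, j⟩ * fderiv ℝ Z x (Pi.single ⟨i, j⟩ 1))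
    (hSpos : ∀ i, 0 < S i)
    (x' : ((i : Fin k) × Fin (m i)) → ℝ)
    (hx' : ∀ i j, x' ⟨i, j⟩ = x ⟨i, j⟩ * fderiv ℝ Z x (Pi.single ⟨i, j⟩ 1) / S i) :
    Real.log (Z x' / Z x) ≥
      ∑ i, (S i / Z x) * ∑ j, x' ⟨i, j⟩ * Real.log (x' ⟨i, j⟩ / x ⟨i, j⟩) := by
  classical
  -- openness of the positive orthant
  have hopen : IsOpen {y : ((i : Fin k) × Fin (m i)) → ℝ | ∀ p, 0 < y p} := by
    have : {y : ((i : Fin k) × Fin (m i)) → ℝ | ∀ p, 0 < y p} = Set.pi Set.univ (fun _ : ((i : Fin k) × Fin (m i)) => Set.Ioi (0:ℝ)) := by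
      ext y; simp [Set.mem_pi]
    rw [this]
    exact isOpen_set_pi Set.finite_univ (fun p _ => isOpen_Ioi)
  -- Z is differentiable at x
  have hZd : DifferentiableAt ℝ Z x := by
    have := (hsmooth.contDiffAt (hopen.mem_nhds hx))
    exact this.differentiableAt (by simp)
  set D := fderiv ℝ Z x with hD
  have hZx : 0 < Z x := hpos x hx
  -- derivative is nonnegative in each coordinate
  have hDnn : ∀ p : ((i : Fin k) × Fin (m i)), 0 ≤ D (Pi.single p 1) := by
    intro p
    have hline : HasDerivAt (fun t : ℝ => x + t • (Pi.single p 1 : ((i : Fin k) × Fin (m i)) → ℝ)) (Pi.single p 1) 0 := by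
      simpa using ((hasDerivAt_id (0:ℝ)).smul_const ((Pi.single p 1 : ((i : Fin k) × Fin (m i)) → ℝ))).const_add x
    have hphi : HasDerivAt (fun t : ℝ => Z (x + t • (Pi.single p 1 : ((i : Fin k) × Fin (m i)) → ℝ))) (D (Pi.single p 1)) 0 := by
      refine hZd.hasFDerivAt.comp_hasDerivAt_of_eq 0 hline ?_
      simp
    have hslope := hasDerivAt_iff_tendsto_slope.mp hphi
    have hslope' : Tendsto (slope (fun t : ℝ => Z (x + t • (Pi.single p 1 : ((i : Fin k) × Fin (m i)) → ℝ))) 0)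
        (𝓝[>] 0) (𝓝 (D (Pi.single p 1))) :=
      hslope.mono_left (nhdsWithin_mono 0 (fun t ht => ne_of_gt ht))
    refine ge_of_tendsto hslope' ?_
    filter_upwards [self_mem_nhdsWithin] with t (ht : 0 < t)
    have hy : ∀ q, 0 < (x + t • (Pi.single p 1 : ((i : Fin k) × Fin (m i)) → ℝ)) q := by
      intro q
      have : 0 ≤ (t • (Pi.single p 1 : ((i : Fin k) × Fin (m i)) → ℝ)) q := by
        simp only [Pi.smul_apply, smul_eq_mul]
        rcases eq_or_ne q p with h | h
        · subst h; simp [ht.le]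
        · simp [Pi.single_eq_of_ne h]
      simpa using add_pos_of_pos_of_nonneg (hx q) this
    have hle : ∀ q, x q ≤ (x + t • (Pi.single p 1 : ((i : Fin k) × Fin (m i)) → ℝ)) q := by
      intro q
      have : 0 ≤ (t • (Pi.single p 1 : ((i : Fin k) × Fin (m i)) → ℝ)) q := by
        simp only [Pi.smul_apply, smul_eq_mul]
        rcases eq_or_ne q p with h | h
        · subst h; simp [ht.le]
        · simp [Pi.single_eq_of_ne h]
      calc x q ≤ x q + (t • (Pi.single p 1 : ((i : Fin k) × Fin (m i)) → ℝ)) q := le_add_of_nonneg_right this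
        _ = (x + t • (Pi.single p 1 : ((i : Fin k) × Fin (m i)) → ℝ)) q := rfl
    have hZle := hmono x (x + t • (Pi.single p 1 : ((i : Fin k) × Fin (m i)) → ℝ)) hx hy hle
    rw [slope_def_field]
    simp only [zero_smul, add_zero, sub_zero]
    apply div_nonneg _ ht.le
    simpa using sub_nonneg.mpr hZle
  -- abbreviations
  set c : ((i : Fin k) × Fin (m i)) → ℝ := fun p => x p * D (Pi.single p 1) with hc
  have hcx' : ∀ p : ((i : Fin k) × Fin (m i)), x' p = c p / S p.1 := by
    rintro ⟨i, j⟩; exact hx' i j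
  have hcnn : ∀ p, 0 ≤ c p := fun p => mul_nonneg (hx p).le (hDnn p)
  have hx'nn : ∀ p, 0 ≤ x' p := fun p => by
    rw [hcx' p]; exact div_nonneg (hcnn p) (hSpos p.1).le
  have hcS : ∀ p, c p = S p.1 * x' p := by
    intro p; rw [hcx' p, mul_comm, div_mul_cancel₀ _ (ne_of_gt (hSpos p.1))]
  have hx'pos : ∀ p, c p ≠ 0 → 0 < x' p := by
    intro p hp
    refine lt_of_le_of_ne (hx'nn p) (fun h => hp ?_)
    rw [hcS p, ← h]; ring
  -- the exponential chart
  set u : ((i : Fin k) × Fin (m i)) → ℝ := fun p => Real.log (x p) with hu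
  have hEu : (fun p => Real.exp (u p)) = x := by
    funext p; exact Real.exp_log (hx p)
  set M : (((i : Fin k) × Fin (m i)) → ℝ) →L[ℝ] (((i : Fin k) × Fin (m i)) → ℝ) :=
    ContinuousLinearMap.pi (fun p => x p • ContinuousLinearMap.proj p) with hM
  have hEM : HasFDerivAt (fun w : ((i : Fin k) × Fin (m i)) → ℝ => (fun p => Real.exp (w p))) M u := by
    apply hasFDerivAt_pi''
    intro p
    rw [hM, ContinuousLinearMap.proj_pi]
    have h1 := hasFDerivAt_apply (𝕜 := ℝ) p u
    have h2 := (Real.hasDerivAt_exp (u p)).comp_hasFDerivAt u h1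
    simpa [hu, Real.exp_log (hx p), Function.comp_def] using h2
  have hZE : HasFDerivAt (fun w : ((i : Fin k) × Fin (m i)) → ℝ => Z (fun p => Real.exp (w p)))
      (D.comp M) u := by
    have hZ2 : HasFDerivAt Z D (fun p => Real.exp (u p)) := by
      rw [hEu]; exact hZd.hasFDerivAt
    exact hZ2.comp u hEM
  have hFd : HasFDerivAt (fun w : ((i : Fin k) × Fin (m i)) → ℝ =>
      Real.log (Z (fun p => Real.exp (w p)))) ((Z x)⁻¹ • (D.comp M)) u := by
    have h := (Real.hasDerivAt_log (ne_of_gt hZx)).comp_hasFDerivAt_of_eq u hZE (by rw [hEu])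
    exact h
  -- linearity expansion of D
  have hDsum : ∀ w : ((i : Fin k) × Fin (m i)) → ℝ,
      D w = ∑ p, w p * D (Pi.single p 1) := by
    intro w
    have hw : w = ∑ p, w p • (Pi.single p 1 : ((i : Fin k) × Fin (m i)) → ℝ) := by
      funext q
      rw [Finset.sum_apply]
      rw [Finset.sum_eq_single q]
      · simp
      · intro b _ hb; simp [Pi.single_eq_of_ne (Ne.symm hb)]
      · intro h; exact absurd (Finset.mem_univ q) h
    conv_lhs => rw [hw]
    rw [map_sum]
    refine Finset.sum_congr rfl fun p _ => ?_
    rw [map_smul]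
    simp [smul_eq_mul]
  -- key inequality for each ε > 0
  have hkey : ∀ ε : ℝ, 0 < ε →
      Real.exp (Real.log (Z x) +
        (∑ p, c p * (Real.log (x' p + ε) - Real.log (x p))) / Z x) ≤
      Z (fun p => x' p + ε) := by
    intro ε hε
    have hvpos : ∀ p, 0 < x' p + ε := fun p => add_pos_of_nonneg_of_pos (hx'nn p) hε
    set v : ((i : Fin k) × Fin (m i)) → ℝ := fun p => Real.log (x' p + ε) with hv
    have hEv : (fun p => Real.exp (v p)) = fun p => x' p + ε := by
      funext p; exact Real.exp_log (hvpos p)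
    have hgrad := grad_ineq_aux hconv hFd (v := v)
    rw [hEu, hEv] at hgrad
    have hZv : 0 < Z (fun p => x' p + ε) := hpos _ hvpos
    have hMv : M (v - u) = fun p => x p * ((v - u) p) := by
      funext p
      simp [hM, ContinuousLinearMap.pi_apply]
    have hsmul : ((Z x)⁻¹ • (D.comp M)) (v - u)
        = (∑ p, c p * (Real.log (x' p + ε) - Real.log (x p))) / Z x := by
      rw [ContinuousLinearMap.smul_apply, ContinuousLinearMap.comp_apply, hMv, hDsum]
      rw [smul_eq_mul, inv_mul_eq_div]
      congr 1
      refine Finset.sum_congr rfl fun p _ => ?_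
      simp only [hc, hv, hu, Pi.sub_apply]
      ring
    rw [hsmul] at hgrad
    exact (Real.le_log_iff_exp_le hZv).mp hgrad
  -- pass to the limit ε → 0⁺
  set T : ℝ := ∑ p, c p * (Real.log (x' p) - Real.log (x p)) with hT
  have htendRHS : Tendsto (fun ε : ℝ => Real.log (Z x) +
      (∑ p, c p * (Real.log (x' p + ε) - Real.log (x p))) / Z x)
      (𝓝[>] (0:ℝ)) (𝓝 (Real.log (Z x) + T / Z x)) := by
    apply Tendsto.const_add
    apply Tendsto.div_const
    rw [hT]
    apply tendsto_finset_sum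
    intro p _
    rcases eq_or_ne (c p) 0 with h | h
    · simp only [h, zero_mul]
      exact tendsto_const_nhds
    · have hxp' : 0 < x' p := hx'pos p h
      have h1 : Tendsto (fun ε : ℝ => x' p + ε) (𝓝[>] (0:ℝ)) (𝓝 (x' p)) := by
        have : Tendsto (fun ε : ℝ => x' p + ε) (𝓝 (0:ℝ)) (𝓝 (x' p)) := by
          simpa using (tendsto_const_nhds (x := x' p) (f := 𝓝 (0:ℝ))).add tendsto_id
        exact this.mono_left nhdsWithin_le_nhds
      have h2 : Tendsto (fun ε : ℝ => Real.log (x' p + ε)) (𝓝[>] (0:ℝ)) (𝓝 (Real.log (x' p))) :=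
        ((Real.continuousAt_log (ne_of_gt hxp')).tendsto).comp h1
      exact (h2.sub tendsto_const_nhds).const_mul _
  have htendZ : Tendsto (fun ε : ℝ => Z (fun p => x' p + ε)) (𝓝[>] (0:ℝ)) (𝓝 (Z x')) := by
    have hmem : x' ∈ {y : ((i : Fin k) × Fin (m i)) → ℝ | ∀ p, 0 ≤ y p} := hx'nn
    have hw : Tendsto Z (𝓝[{y : ((i : Fin k) × Fin (m i)) → ℝ | ∀ p, 0 ≤ y p}] x') (𝓝 (Z x')) :=
      hcont x' hmem
    have hg : Tendsto (fun ε : ℝ => (fun p => x' p + ε))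
        (𝓝[>] (0:ℝ)) (𝓝[{y : ((i : Fin k) × Fin (m i)) → ℝ | ∀ p, 0 ≤ y p}] x') := by
      rw [tendsto_nhdsWithin_iff]
      constructor
      · rw [tendsto_pi_nhds]
        intro p
        have : Tendsto (fun ε : ℝ => x' p + ε) (𝓝 (0:ℝ)) (𝓝 (x' p)) := by
          simpa using (tendsto_const_nhds (x := x' p) (f := 𝓝 (0:ℝ))).add tendsto_id
        exact this.mono_left nhdsWithin_le_nhds
      · filter_upwards [self_mem_nhdsWithin] with ε (hε : 0 < ε)
        intro p
        exact add_nonneg (hx'nn p) hε.le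
    exact hw.comp hg
  have hZx'ge : Real.exp (Real.log (Z x) + T / Z x) ≤ Z x' := by
    refine le_of_tendsto_of_tendsto ((Real.continuous_exp.tendsto _).comp htendRHS) htendZ ?_
    filter_upwards [self_mem_nhdsWithin] with ε (hε : 0 < ε)
    exact hkey ε hε
  have hZx'pos : 0 < Z x' := lt_of_lt_of_le (Real.exp_pos _) hZx'ge
  have hlog : Real.log (Z x) + T / Z x ≤ Real.log (Z x') :=
    (Real.le_log_iff_exp_le hZx'pos).mpr hZx'ge
  -- final algebra
  have hsum : ∑ i, (S i / Z x) * ∑ j, x' ⟨i, j⟩ * Real.log (x' ⟨i, j⟩ / x ⟨i, j⟩)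
      = T / Z x := by
    rw [hT, ← Finset.univ_sigma_univ, Finset.sum_sigma, Finset.sum_div]
    refine Finset.sum_congr rfl fun i _ => ?_
    rw [Finset.mul_sum, Finset.sum_div]
    refine Finset.sum_congr rfl fun j _ => ?_
    rcases eq_or_lt_of_le (hx'nn ⟨i, j⟩) with h0 | h0
    · have hc0 : c ⟨i, j⟩ = 0 := by rw [hcS ⟨i, j⟩, ← h0]; ring
      rw [← h0, hc0]
      simp
    · rw [Real.log_div (ne_of_gt h0) (ne_of_gt (hx ⟨i, j⟩)), hcS ⟨i, j⟩]
      ring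
  rw [Real.log_div (ne_of_gt hZx'pos) (ne_of_gt hZx), hsum]
  linarith
end

section
/- Let Z be a smooth knee-jerk function of variables x_{i,j} (1 ≤ i ≤ k, 1 ≤ j ≤ nᵢ), and let x lie in the product of open simplices T = {x_{i,j} > 0, Σⱼ x_{i,j} = 1 for each i}, with Σⱼ x_{i,j} Z_{x_{i,j}}(x) > 0 for each i. Then Z(T_Z(x)) ≥ Z(x), where T_Z(x)_{i,j} = x_{i,j} Z_{x_{i,j}}(x)/Σⱼ x_{i,j} Z_{x_{i,j}}(x). -/
open Filter Topology

/-- Subgradient inequality for a convex function differentiable at a point. -/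
lemma subgrad_aux {E : Type*} [NormedAddCommGroup E] [NormedSpace ℝ E]
    {f : E → ℝ} {L : E →L[ℝ] ℝ} {u : E}
    (hf : ConvexOn ℝ Set.univ f) (hd : HasFDerivAt f L u) (v : E) :
    f u + L (v - u) ≤ f v := by
  set g : ℝ → E := fun t => u + t • (v - u) with hg
  have hpath : HasDerivAt g (v - u) 0 := by
    exact (by simpa using ((hasDerivAt_id (0:ℝ)).smul_const (v - u)) :
      HasDerivAt (fun t : ℝ => t • (v - u)) (v - u) 0).const_add u
  have hg0 : g 0 = u := by simp [hg]
  have hgd : HasDerivAt (f ∘ g) (L (v - u)) 0 := by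
    refine HasFDerivAt.comp_hasDerivAt 0 ?_ hpath
    rwa [hg0]
  have hslope : Tendsto (slope (f ∘ g) 0) (𝓝[>] (0:ℝ)) (𝓝 (L (v - u))) :=
    (hasDerivAt_iff_tendsto_slope.1 hgd).mono_left
      (nhdsWithin_mono _ (fun t ht => ne_of_gt ht))
  have hbound : ∀ t ∈ Set.Ioo (0:ℝ) 1, slope (f ∘ g) 0 t ≤ f v - f u := by
    intro t ht
    have h1 : g t = (1 - t) • u + t • v := by
      simp [hg, smul_sub, sub_smul]; abel
    have h2 : f (g t) ≤ (1 - t) * f u + t * f v := by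
      rw [h1]
      exact hf.2 (Set.mem_univ u) (Set.mem_univ v) (by linarith [ht.2]) ht.1.le (by ring)
    have : (f ∘ g) t - (f ∘ g) 0 ≤ t * (f v - f u) := by
      simp only [Function.comp_apply, hg0]
      nlinarith [h2]
    rw [slope_def_field, sub_zero, div_le_iff₀ ht.1]
    linarith [this]
  have hle : L (v - u) ≤ f v - f u := by
    refine le_of_tendsto hslope ?_
    filter_upwards [Ioo_mem_nhdsGT_of_mem (Set.mem_Ico.2 ⟨le_rfl, one_pos⟩)] with t ht
    exact hbound t ht
  linarith

set_option maxHeartbeats 1000000 in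
/-- For a smooth knee-jerk function of variables `x_{i,j}` and `x` in the product of open
standard simplices, the knee-jerk map does not decrease `Z`. -/
theorem stmt_17 (k : ℕ) (m : Fin k → ℕ)
    (Z : (((i : Fin k) × Fin (m i)) → ℝ) → ℝ)
    (hpos : ∀ x : ((i : Fin k) × Fin (m i)) → ℝ, (∀ p, 0 < x p) → 0 < Z x)
    (hmono : ∀ x y : ((i : Fin k) × Fin (m i)) → ℝ, (∀ p, 0 < x p) → (∀ p, 0 < y p) →
      (∀ p, x p ≤ y p) → Z x ≤ Z y)
    (hconv : ConvexOn ℝ Set.univ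
      (fun u : ((i : Fin k) × Fin (m i)) → ℝ => Real.log (Z (fun p => Real.exp (u p)))))
    (hsmooth : ContDiffOn ℝ (⊤ : ℕ∞) Z {x : ((i : Fin k) × Fin (m i)) → ℝ | ∀ p, 0 < x p})
    (hcont : ContinuousOn Z {x : ((i : Fin k) × Fin (m i)) → ℝ | ∀ p, 0 ≤ x p})
    (x : ((i : Fin k) × Fin (m i)) → ℝ) (hx : ∀ p, 0 < x p)
    (hxs : ∀ i, ∑ j, x ⟨i, j⟩ = 1)
    (S : Fin k → ℝ)
    (hS : ∀ i, S i = ∑ j, x ⟨i, j⟩ * fderiv ℝ Z x (Pi.single ⟨i, j⟩ 1))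
    (hSpos : ∀ i, 0 < S i)
    (x' : ((i : Fin k) × Fin (m i)) → ℝ)
    (hx' : ∀ i j, x' ⟨i, j⟩ = x ⟨i, j⟩ * fderiv ℝ Z x (Pi.single ⟨i, j⟩ 1) / S i) :
    Z x' ≥ Z x := by
  classical
  have hUopen : IsOpen {y : ((i : Fin k) × Fin (m i)) → ℝ | ∀ p, 0 < y p} := by
    have : {y : ((i : Fin k) × Fin (m i)) → ℝ | ∀ p, 0 < y p}
        = ⋂ p, (fun y : ((i : Fin k) × Fin (m i)) → ℝ => y p) ⁻¹' Set.Ioi 0 := by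
      ext y; simp [Set.mem_iInter]
    rw [this]
    exact isOpen_iInter_of_finite fun p => isOpen_Ioi.preimage (continuous_apply p)
  set Df : (((i : Fin k) × Fin (m i)) → ℝ) →L[ℝ] ℝ := fderiv ℝ Z x with hDf
  set D : ((i : Fin k) × Fin (m i)) → ℝ := fun p => Df (Pi.single p 1) with hD
  have hZx : 0 < Z x := hpos x hx
  have hZdiff : DifferentiableAt ℝ Z x :=
    (hsmooth.contDiffAt (hUopen.mem_nhds hx)).differentiableAt (by simp)
  have hZfd : HasFDerivAt Z Df x := hZdiff.hasFDerivAt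
  -- all partial derivatives are nonnegative
  have hDnn : ∀ p, 0 ≤ D p := by
    intro p
    set c : ((i : Fin k) × Fin (m i)) → ℝ := Pi.single p 1 with hc
    set f : ℝ → ℝ := fun t => Z (x + t • c) with hf
    have hpath : HasDerivAt (fun t : ℝ => x + t • c) c 0 := by
      simpa using ((hasDerivAt_id (0:ℝ)).smul_const c).const_add x
    have hfd : HasDerivAt f (D p) 0 := by
      have := HasFDerivAt.comp_hasDerivAt 0 (by simpa using hZfd) hpath
      exact this
    have hslope : Tendsto (slope f 0) (𝓝[>] (0:ℝ)) (𝓝 (D p)) :=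
      (hasDerivAt_iff_tendsto_slope.1 hfd).mono_left
        (nhdsWithin_mono _ (fun t ht => ne_of_gt ht))
    refine ge_of_tendsto hslope ?_
    filter_upwards [self_mem_nhdsWithin] with t (ht : 0 < t)
    have hnn : ∀ q, (0:ℝ) ≤ (t • c) q := by
      intro q
      rcases eq_or_ne q p with rfl | hq
      · simp [hc, ht.le]
      · simp [hc, Pi.single_eq_of_ne hq]
    have hpos' : ∀ q, 0 < (x + t • c) q := by
      intro q
      have h1 := hnn q
      have h2 := hx q
      simp only [Pi.add_apply]
      linarith
    have hle : Z x ≤ Z (x + t • c) :=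
      hmono x _ hx hpos' (fun q => by have := hnn q; simp only [Pi.add_apply]; linarith)
    rw [slope_def_field, sub_zero]
    refine div_nonneg ?_ ht.le
    have hf0 : f 0 = Z x := by simp [hf]
    have hft : f t = Z (x + t • c) := rfl
    rw [hft, hf0]
    linarith
  -- linearity of the derivative
  have lin : ∀ y : ((i : Fin k) × Fin (m i)) → ℝ, Df y = ∑ p, y p * D p := by
    intro y
    have hy : y = ∑ p, y p • (Pi.single p 1 : ((i : Fin k) × Fin (m i)) → ℝ) := by
      conv_lhs => rw [← Finset.univ_sum_single y]
      refine Finset.sum_congr rfl fun p _ => ?_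
      rw [← Pi.single_smul, smul_eq_mul, mul_one]
    conv_lhs => rw [hy]
    rw [map_sum]
    exact Finset.sum_congr rfl fun p _ => by rw [map_smul, smul_eq_mul]
  -- nonnegativity of x'
  have hx'nn : ∀ p, 0 ≤ x' p := by
    rintro ⟨i, j⟩
    rw [hx' i j]
    exact div_nonneg (mul_nonneg (hx ⟨i, j⟩).le (hDnn ⟨i, j⟩)) (hSpos i).le
  have hxD : ∀ p : ((i : Fin k) × Fin (m i)), x p * D p = S p.1 * x' p := by
    rintro ⟨i, j⟩
    rw [hx' i j, hD]
    simp only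
    rw [hDf]
    rw [mul_comm (S i), div_mul_cancel₀ _ (hSpos i).ne']
  have hx's : ∀ i, ∑ j, x' ⟨i, j⟩ = 1 := by
    intro i
    have : ∀ j : Fin (m i), x' ⟨i, j⟩ = x ⟨i, j⟩ * fderiv ℝ Z x (Pi.single ⟨i, j⟩ 1) / S i :=
      hx' i
    rw [Finset.sum_congr rfl fun j _ => this j]
    rw [← Finset.sum_div, ← hS i, div_self (hSpos i).ne']
  -- derivative of F := log ∘ Z ∘ exp at u0 := log ∘ x
  set u0 : ((i : Fin k) × Fin (m i)) → ℝ := fun p => Real.log (x p) with hu0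
  set E : (((i : Fin k) × Fin (m i)) → ℝ) →L[ℝ] (((i : Fin k) × Fin (m i)) → ℝ) :=
    ContinuousLinearMap.pi (fun p => x p • ContinuousLinearMap.proj p) with hE
  have hΦu0 : (fun p => Real.exp (u0 p)) = x := by
    funext p; exact Real.exp_log (hx p)
  have hΦ : HasFDerivAt
      (fun u : ((i : Fin k) × Fin (m i)) → ℝ => (fun p => Real.exp (u p))) E u0 := by
    rw [hE]
    refine hasFDerivAt_pi.2 fun p => ?_
    have h1 := hasFDerivAt_apply (𝕜 := ℝ) p u0
    have h2 := (Real.hasDerivAt_exp (u0 p)).comp_hasFDerivAt u0 h1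
    have h3 : Real.exp (u0 p) = x p := Real.exp_log (hx p)
    rwa [h3] at h2
  set L : (((i : Fin k) × Fin (m i)) → ℝ) →L[ℝ] ℝ := (Z x)⁻¹ • (Df.comp E) with hL
  have hF : HasFDerivAt
      (fun u : ((i : Fin k) × Fin (m i)) → ℝ => Real.log (Z (fun p => Real.exp (u p)))) L u0 := by
    have hZΦ : HasFDerivAt
        (fun u : ((i : Fin k) × Fin (m i)) → ℝ => Z (fun p => Real.exp (u p)))
        (Df.comp E) u0 := by
      refine HasFDerivAt.comp u0 ?_ hΦ
      rwa [hΦu0]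
    have hlog : HasDerivAt Real.log (Z x)⁻¹
        ((fun u : ((i : Fin k) × Fin (m i)) → ℝ => Z (fun p => Real.exp (u p))) u0) := by
      simp only [hΦu0]
      exact Real.hasDerivAt_log hZx.ne'
    exact hlog.comp_hasFDerivAt u0 hZΦ
  have hLapp : ∀ v : ((i : Fin k) × Fin (m i)) → ℝ,
      L v = (Z x)⁻¹ * ∑ p, x p * v p * D p := by
    intro v
    have hEv : E v = fun p => x p * v p := by
      funext p
      simp [hE]
    rw [hL]
    simp only [ContinuousLinearMap.smul_apply, ContinuousLinearMap.coe_comp',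
      Function.comp_apply, smul_eq_mul]
    rw [hEv, lin]
  -- the inequality for positive perturbations
  have key : ∀ ε : ℝ, 0 < ε → Z x ≤ Z (x' + ε • x) := by
    intro ε hε
    have hypos : ∀ p, 0 < (x' + ε • x) p := by
      intro p
      have h1 := hx'nn p
      have h2 := hx p
      simp only [Pi.add_apply, Pi.smul_apply, smul_eq_mul]
      nlinarith
    set v : ((i : Fin k) × Fin (m i)) → ℝ := fun p => Real.log ((x' + ε • x) p) with hv
    have hsub := subgrad_aux hconv hF v
    have hFv : (fun q => Real.exp (v q)) = x' + ε • x := by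
      funext p; exact Real.exp_log (hypos p)
    rw [hFv, hΦu0] at hsub
    have hLsum : L (v - u0) = (Z x)⁻¹ * ∑ p, x p * (v p - u0 p) * D p := by
      rw [hLapp]; rfl
    have hA : (0:ℝ) ≤ ∑ p, x p * (v p - u0 p) * D p := by
      have step : ∀ p : ((i : Fin k) × Fin (m i)),
          S p.1 * (x' p - x p) ≤ x p * (v p - u0 p) * D p := by
        intro p
        have hrw : x p * (v p - u0 p) * D p = S p.1 * (x' p * (v p - u0 p)) := by
          linear_combination (v p - u0 p) * (hxD p)
        rw [hrw]
        rcases eq_or_lt_of_le (hx'nn p) with h0 | h0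
        · rw [← h0]
          simp only [zero_mul, mul_zero, zero_sub]
          nlinarith [hSpos p.1, hx p]
        · refine mul_le_mul_of_nonneg_left ?_ (hSpos p.1).le
          have hlog1 : Real.log (x p / x' p) ≤ x p / x' p - 1 :=
            Real.log_le_sub_one_of_pos (div_pos (hx p) h0)
          have hylog : Real.log (x' p) ≤ v p := by
            rw [hv]
            refine Real.log_le_log h0 ?_
            simp only [Pi.add_apply, Pi.smul_apply, smul_eq_mul]
            nlinarith [hx p]
          have hdiv : Real.log (x p / x' p) = u0 p - Real.log (x' p) := by
            rw [hu0, Real.log_div (hx p).ne' h0.ne']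
          have h2 : u0 p - v p ≤ x p / x' p - 1 := by
            rw [hdiv] at hlog1; linarith
          have h3 : x' p * (u0 p - v p) ≤ x' p * (x p / x' p - 1) :=
            mul_le_mul_of_nonneg_left h2 h0.le
          have h4 : x' p * (x p / x' p - 1) = x p - x' p := by
            field_simp
          nlinarith [h3, h4]
      have hsum2 : ∑ p : ((i : Fin k) × Fin (m i)), S p.1 * (x' p - x p) = 0 := by
        rw [← Finset.univ_sigma_univ, Finset.sum_sigma]
        have hterm : ∀ i : Fin k, ∑ j : Fin (m i), S i * (x' ⟨i, j⟩ - x ⟨i, j⟩) = 0 := by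
          intro i
          rw [← Finset.mul_sum, Finset.sum_sub_distrib, hx's i, hxs i]
          ring
        exact Finset.sum_eq_zero fun i _ => hterm i
      calc (0:ℝ) = ∑ p : ((i : Fin k) × Fin (m i)), S p.1 * (x' p - x p) := hsum2.symm
        _ ≤ _ := Finset.sum_le_sum fun p _ => step p
    have hlogle : Real.log (Z x) ≤ Real.log (Z (x' + ε • x)) := by
      have h0 : 0 ≤ L (v - u0) := by
        rw [hLsum]
        exact mul_nonneg (inv_nonneg.2 hZx.le) hA
      linarith [hsub]
    have hZy : 0 < Z (x' + ε • x) := hpos _ hypos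
    calc Z x = Real.exp (Real.log (Z x)) := (Real.exp_log hZx).symm
      _ ≤ Real.exp (Real.log (Z (x' + ε • x))) := Real.exp_le_exp.2 hlogle
      _ = Z (x' + ε • x) := Real.exp_log hZy
  -- take the limit ε → 0⁺
  have hx'mem : x' ∈ {y : ((i : Fin k) × Fin (m i)) → ℝ | ∀ p, 0 ≤ y p} := hx'nn
  have hct : Tendsto (fun ε : ℝ => Z (x' + ε • x)) (𝓝[>] (0:ℝ)) (𝓝 (Z x')) := by
    have h1 : Tendsto (fun ε : ℝ => x' + ε • x) (𝓝[>] (0:ℝ)) (𝓝 x') := by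
      have h0 : Tendsto (fun ε : ℝ => x' + ε • x) (𝓝 (0:ℝ)) (𝓝 x') := by
        have hcc : Continuous (fun ε : ℝ => x' + ε • x) :=
          continuous_const.add (continuous_id.smul continuous_const)
        have := hcc.tendsto (0:ℝ)
        simpa using this
      exact h0.mono_left nhdsWithin_le_nhds
    have h2 : Tendsto (fun ε : ℝ => x' + ε • x) (𝓝[>] (0:ℝ))
        (𝓝[{y : ((i : Fin k) × Fin (m i)) → ℝ | ∀ p, 0 ≤ y p}] x') := by
      refine tendsto_nhdsWithin_of_tendsto_nhds_of_eventually_within _ h1 ?_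
      filter_upwards [self_mem_nhdsWithin] with ε (hε : 0 < ε)
      intro p
      have h1 := hx'nn p
      have h2 := hx p
      simp only [Pi.add_apply, Pi.smul_apply, smul_eq_mul]
      nlinarith
    exact ((hcont x' hx'mem).tendsto).comp h2
  refine ge_of_tendsto hct ?_
  filter_upwards [self_mem_nhdsWithin] with ε (hε : 0 < ε)
  exact key ε hε
end

section
/- The polynomial Z(x,y,z) = xy + xz + yz (the spanning-tree discriminant of the triangle graph) is log-concave on the positive octant: log Z is a concave function of (x,y,z) on {x,y,z > 0}. -/
lemma key_ineq (x1 x2 x3 y1 y2 y3 : ℝ) (hx1 : 0 < x1) (hx2 : 0 < x2) (hx3 : 0 < x3) :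
    4*(x1*x2+x1*x3+x2*x3)*(y1*y2+y1*y3+y2*y3)
      ≤ (x1*y2+x2*y1+x1*y3+x3*y1+x2*y3+x3*y2)^2 := by
  set e1 := x2*y3 - x3*y2 with he1
  set e2 := x3*y1 - x1*y3 with he2
  set e3 := x1*y2 - x2*y1 with he3
  have horth : x1*e1 + x2*e2 + x3*e3 = 0 := by rw [he1, he2, he3]; ring
  have hid12 : (x1*y2+x2*y1+x1*y3+x3*y1+x2*y3+x3*y2)^2
      - 4*(x1*x2+x1*x3+x2*x3)*(y1*y2+y1*y3+y2*y3) = (e3 - e1 - e2)^2 - 4*(e1*e2) := by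
    rw [he1, he2, he3]; ring
  have hid13 : (x1*y2+x2*y1+x1*y3+x3*y1+x2*y3+x3*y2)^2
      - 4*(x1*x2+x1*x3+x2*x3)*(y1*y2+y1*y3+y2*y3) = (e2 - e1 - e3)^2 - 4*(e1*e3) := by
    rw [he1, he2, he3]; ring
  have hid23 : (x1*y2+x2*y1+x1*y3+x3*y1+x2*y3+x3*y2)^2
      - 4*(x1*x2+x1*x3+x2*x3)*(y1*y2+y1*y3+y2*y3) = (e1 - e2 - e3)^2 - 4*(e2*e3) := by
    rw [he1, he2, he3]; ring
  have hcase : e1*e2 ≤ 0 ∨ e1*e3 ≤ 0 ∨ e2*e3 ≤ 0 := by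
    by_contra h
    push_neg at h
    obtain ⟨h12, h13, h23⟩ := h
    rcases mul_pos_iff.mp h12 with ⟨a1, a2⟩ | ⟨a1, a2⟩
    · have a3 : 0 < e3 := by
        rcases mul_pos_iff.mp h13 with ⟨_, b⟩ | ⟨b, _⟩
        · exact b
        · linarith
      have := mul_pos hx1 a1
      have := mul_pos hx2 a2
      have := mul_pos hx3 a3
      linarith
    · have a3 : e3 < 0 := by
        rcases mul_pos_iff.mp h13 with ⟨b, _⟩ | ⟨_, b⟩
        · linarith
        · exact b
      have m1 : x1*e1 < 0 := mul_neg_of_pos_of_neg hx1 a1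
      have m2 : x2*e2 < 0 := mul_neg_of_pos_of_neg hx2 a2
      have m3 : x3*e3 < 0 := mul_neg_of_pos_of_neg hx3 a3
      linarith
  rcases hcase with h | h | h
  · nlinarith [sq_nonneg (e3 - e1 - e2)]
  · nlinarith [sq_nonneg (e2 - e1 - e3)]
  · nlinarith [sq_nonneg (e1 - e2 - e3)]

/-- The spanning-tree discriminant `xy + xz + yz` of the triangle graph is log-concave on
the positive octant. -/
theorem stmt_18 :
    ConcaveOn ℝ {p : Fin 3 → ℝ | ∀ i, 0 < p i}
      (fun p : Fin 3 → ℝ => Real.log (p 0 * p 1 + p 0 * p 2 + p 1 * p 2)) := by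
  constructor
  · intro p hp q hq a b ha hb hab i
    show 0 < a * p i + b * q i
    rcases ha.lt_or_eq with h | h
    · have h1 := mul_pos h (hp i)
      have h2 := mul_nonneg hb (hq i).le
      linarith
    · have hb1 : b = 1 := by linarith
      rw [← h, hb1]
      simpa using hq i
  · intro p hp q hq a b ha hb hab
    simp only [smul_eq_mul, Pi.add_apply, Pi.smul_apply]
    set Zp := p 0 * p 1 + p 0 * p 2 + p 1 * p 2 with hZpd
    set Zq := q 0 * q 1 + q 0 * q 2 + q 1 * q 2 with hZqd
    have hp0 := hp 0; have hp1 := hp 1; have hp2 := hp 2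
    have hq0 := hq 0; have hq1 := hq 1; have hq2 := hq 2
    have hZp : 0 < Zp := by rw [hZpd]; positivity
    have hZq : 0 < Zq := by rw [hZqd]; positivity
    set B := p 0 * q 1 + p 1 * q 0 + p 0 * q 2 + p 2 * q 0 + p 1 * q 2 + p 2 * q 1 with hBd
    have hB : 0 ≤ B := by rw [hBd]; positivity
    have hkey : 4 * Zp * Zq ≤ B ^ 2 := by
      rw [hZpd, hZqd, hBd]
      exact key_ineq (p 0) (p 1) (p 2) (q 0) (q 1) (q 2) hp0 hp1 hp2
    set u := Real.sqrt Zp with hud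
    set v := Real.sqrt Zq with hvd
    have hu : 0 < u := Real.sqrt_pos.mpr hZp
    have hv : 0 < v := Real.sqrt_pos.mpr hZq
    have hu2 : u * u = Zp := Real.mul_self_sqrt hZp.le
    have hv2 : v * v = Zq := Real.mul_self_sqrt hZq.le
    -- 2uv ≤ B
    have huv : 2 * (u * v) ≤ B := by
      nlinarith [hkey, hu2, hv2, mul_pos hu hv, hB]
    -- geometric mean
    have hgm : u ^ a * v ^ b ≤ a * u + b * v :=
      Real.geom_mean_le_arith_mean2_weighted ha hb hu.le hv.le hab
    have hgm' : 0 ≤ u ^ a * v ^ b :=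
      mul_nonneg (Real.rpow_nonneg hu.le a) (Real.rpow_nonneg hv.le b)
    have hsplit : Zp ^ a * Zq ^ b = (u ^ a * v ^ b) * (u ^ a * v ^ b) := by
      rw [← hu2, ← hv2, Real.mul_rpow hu.le hu.le, Real.mul_rpow hv.le hv.le]
      ring
    -- the mixture value
    have hmix : (a * p 0 + b * q 0) * (a * p 1 + b * q 1)
        + (a * p 0 + b * q 0) * (a * p 2 + b * q 2)
        + (a * p 1 + b * q 1) * (a * p 2 + b * q 2)
        = a ^ 2 * Zp + a * b * B + b ^ 2 * Zq := by
      rw [hZpd, hZqd, hBd]; ring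
    have hstep : Zp ^ a * Zq ^ b ≤ a ^ 2 * Zp + a * b * B + b ^ 2 * Zq := by
      have h1 : (u ^ a * v ^ b) * (u ^ a * v ^ b) ≤ (a * u + b * v) * (a * u + b * v) :=
        mul_le_mul hgm hgm hgm' (by positivity)
      have hab' : 0 ≤ a * b := mul_nonneg ha hb
      have h2 : (a * u + b * v) * (a * u + b * v)
          = a ^ 2 * (u * u) + b ^ 2 * (v * v) + a * b * (2 * (u * v)) := by ring
      rw [hu2, hv2] at h2
      have h3 : a * b * (2 * (u * v)) ≤ a * b * B :=
        mul_le_mul_of_nonneg_left huv hab'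
      rw [hsplit]
      linarith
    calc a * Real.log Zp + b * Real.log Zq
        = Real.log (Zp ^ a * Zq ^ b) := by
          rw [Real.log_mul (by positivity) (by positivity),
            Real.log_rpow hZp, Real.log_rpow hZq]
      _ ≤ Real.log ((a * p 0 + b * q 0) * (a * p 1 + b * q 1)
            + (a * p 0 + b * q 0) * (a * p 2 + b * q 2)
            + (a * p 1 + b * q 1) * (a * p 2 + b * q 2)) := by
          apply Real.log_le_log (by positivity)
          rw [hmix]; exact hstep
end
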